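/- arXiv:2302.04115 — 10 statements merged into one kernel-verified Lean document; each statement's English description precedes it below -/
import Mathlib

section
/- Let (Ω, A, P) be a probability space and (A_n)_{n∈ℕ} a sequence of events with ∑_{n=1}^∞ P(A_n) < ∞. Define O := ∑_{n=1}^∞ 1(A_n). If for a sequence of nonnegative weights a = (a_n)_{n∈ℕ} we have K_a := ∑_{n=1}^∞ a_n ∑_{m=n}^∞ P(A_m) < ∞, then for S_a(N) = ∑_{n=1}^N a_n (with S_a(0) = 0) we have E[S_a(O)] ≤ K_a. -/
open MeasureTheory ProbabilityTheory Set
open scoped ENNReal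

/-- Quantitative first Borel-Cantelli lemma: if `∑ P(Aₙ) < ∞` and
`K_a = ∑ₙ aₙ ∑_{m≥n} P(Aₘ) < ∞`, then `E[S_a(O)] ≤ K_a`, where
`O = ∑_{n≥1} 1(Aₙ)` and `S_a(N) = ∑_{n=1}^N aₙ`, i.e.
`S_a(O) = ∑_{n≥1} aₙ · 1{n ≤ O}`. -/
theorem stmt0 {Ω : Type*} [MeasurableSpace Ω] (P : Measure Ω) [IsProbabilityMeasure P]
    (A : ℕ → Set Ω) (hA : ∀ n, MeasurableSet (A n))
    (hPsum : (∑' n : ℕ, P (A (n + 1))) < ⊤)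
    (a : ℕ → ℝ≥0∞)
    (hKa : (∑' n : ℕ, a (n + 1) * ∑' m : ℕ, P (A (n + 1 + m))) < ⊤) :
    (∫⁻ ω, ∑' n : ℕ, a (n + 1) *
        Set.indicator
          {ω' | ((n : ℝ≥0∞) + 1) ≤ ∑' m : ℕ, Set.indicator (A (m + 1)) (fun _ => (1 : ℝ≥0∞)) ω'}
          (fun _ => (1 : ℝ≥0∞)) ω ∂P)
      ≤ ∑' n : ℕ, a (n + 1) * ∑' m : ℕ, P (A (n + 1 + m)) := by

  classical
  have hmeasO : Measurable (fun ω => ∑' m : ℕ, Set.indicator (A (m + 1)) (fun _ => (1 : ℝ≥0∞)) ω) :=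
    Measurable.ennreal_tsum fun m => measurable_const.indicator (hA (m + 1))
  have hmeasS : ∀ n : ℕ, MeasurableSet {ω' | ((n : ℝ≥0∞) + 1) ≤
      ∑' m : ℕ, Set.indicator (A (m + 1)) (fun _ => (1 : ℝ≥0∞)) ω'} :=
    fun n => measurableSet_le measurable_const hmeasO
  rw [lintegral_tsum (fun n => ((measurable_const.indicator (hmeasS n)).const_mul _).aemeasurable)]
  refine ENNReal.tsum_le_tsum fun n => ?_
  rw [lintegral_const_mul _ (measurable_const.indicator (hmeasS n))]
  gcongr
  rw [lintegral_indicator (hmeasS n), setLIntegral_one]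
  have hsub : {ω' | ((n : ℝ≥0∞) + 1) ≤
      ∑' m : ℕ, Set.indicator (A (m + 1)) (fun _ => (1 : ℝ≥0∞)) ω'} ⊆ ⋃ k : ℕ, A (n + 1 + k) := by
    intro ω hω
    by_contra hc
    simp only [Set.mem_iUnion, not_exists] at hc
    have hzero : ∀ m, n ≤ m → Set.indicator (A (m + 1)) (fun _ => (1 : ℝ≥0∞)) ω = 0 := by
      intro m hm
      have hnot : ω ∉ A (m + 1) := by
        have := hc (m - n)
        rwa [show n + 1 + (m - n) = m + 1 by omega] at this
      simp [Set.indicator_of_notMem hnot]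
    have hle : (∑' m : ℕ, Set.indicator (A (m + 1)) (fun _ => (1 : ℝ≥0∞)) ω) ≤ (n : ℝ≥0∞) := by
      calc (∑' m : ℕ, Set.indicator (A (m + 1)) (fun _ => (1 : ℝ≥0∞)) ω)
          = ∑ m ∈ Finset.range n, Set.indicator (A (m + 1)) (fun _ => (1 : ℝ≥0∞)) ω := by
            exact tsum_eq_sum fun m hm => hzero m (le_of_not_gt (by simpa using hm))
        _ ≤ ∑ m ∈ Finset.range n, 1 :=
            Finset.sum_le_sum fun m _ => Set.indicator_apply_le fun _ => le_refl _
        _ = n := by simp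
    have hcon : ((n : ℝ≥0∞) + 1) ≤ (n : ℝ≥0∞) := le_trans hω hle
    have : ((n : ℝ≥0∞)) < (n : ℝ≥0∞) + 1 :=
      ENNReal.lt_add_right (ENNReal.natCast_ne_top n) one_ne_zero
    exact absurd hcon (not_le.mpr this)
  calc P _ ≤ P (⋃ k : ℕ, A (n + 1 + k)) := measure_mono hsub
    _ ≤ ∑' k : ℕ, P (A (n + 1 + k)) := measure_iUnion_le _
end

section
/- Let (A_n)_{n∈ℕ} be events with P(A_n) ≤ c·n^{-q} for some c > 0 and q > 1, and let O := ∑_{n=1}^∞ 1(A_n). Then for all 0 < p < q - 2 we have E[O^{p+1}] ≤ c·q·ζ(q-p-1), where ζ denotes the Riemann zeta function. Consequently P(O ≥ k) ≤ k^{-(p+1)}·c·q·ζ(q-p-1) for all k ≥ 1. -/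
/-! If `ω` lies in exactly the events `A_{n₁}, …, A_{n_m}` with `n₁ < ⋯ < n_m`, then `n_i ≥ i`, and
convexity of `t ↦ t ^ (p + 1)` gives `m ^ (p + 1) ≤ (p + 1) ∑_{i ≤ m} i ^ p ≤ (p + 1) ∑_i n_i ^ p`.
Integrating, `E[O ^ (p + 1)] ≤ (p + 1) ∑ n ^ p P(A_n) ≤ c (p + 1) ∑ n ^ (p - q) ≤ c q ζ(q - p - 1)`;
the tail bound is Markov's inequality for `O ^ (p + 1)`. -/

open MeasureTheory Set
open scoped ENNReal

theorem add_one_rpow_le_rpow_add_mul {x p : ℝ} (hx : 0 ≤ x) (hp : 0 ≤ p) :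
    (x + 1) ^ (p + 1) ≤ x ^ (p + 1) + (p + 1) * (x + 1) ^ p := by
  have hslope := (convexOn_rpow (by linarith : 1 ≤ p + 1)).slope_le_of_hasDerivAt
    (mem_Ici.2 hx) (mem_Ici.2 (by linarith : 0 ≤ x + 1)) (lt_add_one x)
    (Real.hasDerivAt_rpow_const (Or.inr (by linarith : 1 ≤ p + 1)))
  rw [slope_def_field, add_sub_cancel_left, div_one, add_sub_cancel_right] at hslope
  linarith

theorem card_rpow_add_one_le {p : ℝ} (hp : 0 ≤ p) (s : Finset ℕ) :
    (s.card : ℝ) ^ (p + 1) ≤ (p + 1) * ∑ n ∈ s, ((n : ℝ) + 1) ^ p := by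
  induction s using Finset.induction_on_max with
  | empty => simp [Real.zero_rpow (by positivity : p + 1 ≠ 0)]
  | insert a s ha ih =>
    have has : a ∉ s := fun h => lt_irrefl a (ha a h)
    have hcard : (s.card : ℝ) ≤ a := by
      exact_mod_cast (Finset.card_le_card fun x hx => Finset.mem_range.2 (ha x hx)).trans_eq
        (Finset.card_range a)
    rw [Finset.card_insert_of_notMem has, Finset.sum_insert has]
    push_cast
    calc ((s.card : ℝ) + 1) ^ (p + 1)
        ≤ (s.card : ℝ) ^ (p + 1) + (p + 1) * ((s.card : ℝ) + 1) ^ p :=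
          add_one_rpow_le_rpow_add_mul (by positivity) hp
      _ ≤ (p + 1) * ∑ n ∈ s, ((n : ℝ) + 1) ^ p + (p + 1) * ((a : ℝ) + 1) ^ p := by gcongr
      _ = (p + 1) * (((a : ℝ) + 1) ^ p + ∑ n ∈ s, ((n : ℝ) + 1) ^ p) := by ring

theorem rpow_mul_rpow_neg_le {x c p q : ℝ} (hx : 1 ≤ x) (hc : 0 ≤ c) (hp : -1 ≤ p)
    (hpq : p + 1 ≤ q) :
    (p + 1) * (x ^ p * (c * x ^ (-q))) ≤ c * q * x ^ (-(q - p - 1)) := by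
  have hx0 : 0 < x := by linarith
  have hexp : x ^ p * x ^ (-q) ≤ x ^ (-(q - p - 1)) := by
    rw [← Real.rpow_add hx0]
    exact Real.rpow_le_rpow_of_exponent_le hx (by linarith)
  calc (p + 1) * (x ^ p * (c * x ^ (-q))) = c * ((p + 1) * (x ^ p * x ^ (-q))) := by ring
    _ ≤ c * (q * x ^ (-(q - p - 1))) := by gcongr; linarith
    _ = c * q * x ^ (-(q - p - 1)) := by ring

theorem encard_rpow_add_one_le {p : ℝ} (hp : 0 ≤ p) (S : Set ℕ) :
    (S.encard : ℝ≥0∞) ^ (p + 1)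
      ≤ ENNReal.ofReal (p + 1) * ∑' n : S, ENNReal.ofReal (((n : ℝ) + 1) ^ p) := by
  rcases S.finite_or_infinite with hS | hS
  · lift S to Finset ℕ using hS
    rw [Set.encard_coe_eq_coe_finsetCard, ENat.toENNReal_coe,
      Finset.tsum_subtype' S fun n => ENNReal.ofReal (((n : ℝ) + 1) ^ p),
      ← ENNReal.ofReal_sum_of_nonneg fun n _ => by positivity, ← ENNReal.ofReal_mul (by positivity),
      ← ENNReal.ofReal_natCast, ENNReal.ofReal_rpow_of_nonneg (Nat.cast_nonneg _) (by positivity)]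
    exact ENNReal.ofReal_le_ofReal (card_rpow_add_one_le hp S)
  · have htop : ∑' n : S, ENNReal.ofReal (((n : ℝ) + 1) ^ p) = ⊤ := by
      refine top_le_iff.1 ?_
      rw [← ENat.toENNReal_top, ← hS.encard_eq, ← ENNReal.tsum_set_one]
      exact ENNReal.tsum_le_tsum fun n => ENNReal.one_le_ofReal.2 (Real.one_le_rpow (by simp) hp)
    rw [htop, ENNReal.mul_top (by simp; linarith)]
    exact le_top

section Measure

variable {Ω : Type*} [MeasurableSpace Ω]

theorem lintegral_tsum_indicator_rpow_le (μ : Measure Ω)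
    {A : ℕ → Set Ω} (hA : ∀ n, MeasurableSet (A n)) {p : ℝ} (hp : 0 ≤ p) :
    ∫⁻ ω, (∑' n, (A n).indicator (fun _ => (1 : ℝ≥0∞)) ω) ^ (p + 1) ∂μ
      ≤ ENNReal.ofReal (p + 1) * ∑' n : ℕ, ENNReal.ofReal (((n : ℝ) + 1) ^ p) * μ (A n) := by
  set w : ℕ → ℝ≥0∞ := fun n => ENNReal.ofReal (((n : ℝ) + 1) ^ p)
  have hpoint : ∀ ω, (∑' n, (A n).indicator (fun _ => (1 : ℝ≥0∞)) ω) ^ (p + 1)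
      ≤ ENNReal.ofReal (p + 1) * ∑' n, (A n).indicator (fun _ => w n) ω := by
    intro ω
    have h := encard_rpow_add_one_le hp {n | ω ∈ A n}
    rwa [← ENNReal.tsum_set_one, tsum_subtype _ fun _ => (1 : ℝ≥0∞), tsum_subtype _ w] at h
  calc _ ≤ ∫⁻ ω, ENNReal.ofReal (p + 1) * ∑' n, (A n).indicator (fun _ => w n) ω ∂μ :=
        lintegral_mono hpoint
    _ = ENNReal.ofReal (p + 1) * ∑' n : ℕ, w n * μ (A n) := by
        rw [lintegral_const_mul _
            (Measurable.tsum fun n => measurable_const.indicator (hA n)),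
          lintegral_tsum fun n => (measurable_const.indicator (hA n)).aemeasurable]
        simp only [lintegral_indicator_const (hA _)]

theorem meas_ge_le_rpow_neg_mul_lintegral_rpow {μ : Measure Ω} {f : Ω → ℝ≥0∞}
    (hf : AEMeasurable f μ) {r : ℝ} (hr : 0 < r) {ε : ℝ≥0∞} (hε : ε ≠ 0) (hε' : ε ≠ ⊤) :
    μ {ω | ε ≤ f ω} ≤ ε ^ (-r) * ∫⁻ ω, f ω ^ r ∂μ := by
  have hset : {ω | ε ≤ f ω} = {ω | ε ^ r ≤ f ω ^ r} := by
    ext ω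
    simp [ENNReal.rpow_le_rpow_iff hr]
  rw [hset, ENNReal.rpow_neg, mul_comm, ← div_eq_mul_inv]
  exact meas_ge_le_lintegral_div (hf.pow_const r) (by simp [hε, hε', hr])
    (ENNReal.rpow_ne_top_of_nonneg hr.le hε')

theorem ofReal_mul_tsum_rpow_mul_le {μ : Measure Ω}
    {B : ℕ → Set Ω} {c p q : ℝ} (hc : 0 ≤ c) (hp : -1 ≤ p) (hpq : p + 2 < q)
    (hB : ∀ n : ℕ, μ (B n) ≤ ENNReal.ofReal (c * ((n : ℝ) + 1) ^ (-q))) :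
    ENNReal.ofReal (p + 1) * ∑' n : ℕ, ENNReal.ofReal (((n : ℝ) + 1) ^ p) * μ (B n)
      ≤ ENNReal.ofReal (c * q * ∑' n : ℕ, ((n : ℝ) + 1) ^ (-(q - p - 1))) := by
  have hsum : Summable fun n : ℕ => ((n : ℝ) + 1) ^ (-(q - p - 1)) := by
    simpa using
      (summable_nat_add_iff 1).2 (Real.summable_nat_rpow.2 (by linarith : -(q - p - 1) < -1))
  rw [← tsum_mul_left, ENNReal.ofReal_tsum_of_nonneg
    (fun n => mul_nonneg (mul_nonneg hc (by linarith)) (by positivity)) (hsum.mul_left _),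
    ← ENNReal.tsum_mul_left]
  refine ENNReal.tsum_le_tsum fun n => ?_
  calc ENNReal.ofReal (p + 1) * (ENNReal.ofReal (((n : ℝ) + 1) ^ p) * μ (B n))
      ≤ ENNReal.ofReal (p + 1) * (ENNReal.ofReal (((n : ℝ) + 1) ^ p) *
          ENNReal.ofReal (c * ((n : ℝ) + 1) ^ (-q))) := by gcongr; exact hB n
    _ = ENNReal.ofReal ((p + 1) * (((n : ℝ) + 1) ^ p * (c * ((n : ℝ) + 1) ^ (-q)))) := by
        rw [← ENNReal.ofReal_mul (by positivity), ← ENNReal.ofReal_mul (by linarith)]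
    _ ≤ ENNReal.ofReal (c * q * ((n : ℝ) + 1) ^ (-(q - p - 1))) :=
        ENNReal.ofReal_le_ofReal (rpow_mul_rpow_neg_le (by simp) hc (by linarith) (by linarith))

end Measure

theorem stmt1_general {Ω : Type*} [MeasurableSpace Ω] (P : Measure Ω)
    (A : ℕ → Set Ω) (hA : ∀ n, MeasurableSet (A n))
    (c q : ℝ) (hc : 0 < c)
    (hbound : ∀ n : ℕ, 1 ≤ n → P (A n) ≤ ENNReal.ofReal (c * (n : ℝ) ^ (-q)))
    (p : ℝ) (hp : 0 < p) (hpq : p < q - 2) :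
    (∫⁻ ω, (∑' n : ℕ, Set.indicator (A (n + 1)) (fun _ => (1 : ℝ≥0∞)) ω) ^ (p + 1) ∂P)
        ≤ ENNReal.ofReal (c * q * ∑' n : ℕ, ((n : ℝ) + 1) ^ (-(q - p - 1))) ∧
    ∀ k : ℕ, 1 ≤ k →
      P {ω | (k : ℝ≥0∞) ≤ ∑' n : ℕ, Set.indicator (A (n + 1)) (fun _ => (1 : ℝ≥0∞)) ω}
        ≤ ENNReal.ofReal ((k : ℝ) ^ (-(p + 1)) *
            (c * q * ∑' n : ℕ, ((n : ℝ) + 1) ^ (-(q - p - 1)))) := by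
  have hmoment := (lintegral_tsum_indicator_rpow_le P (fun n => hA (n + 1)) hp.le).trans
    (ofReal_mul_tsum_rpow_mul_le hc.le (by linarith) (by linarith) fun n => by
      simpa using hbound (n + 1) (by omega))
  refine ⟨hmoment, fun k hk => ?_⟩
  have hO : Measurable fun ω => ∑' n : ℕ, Set.indicator (A (n + 1)) (fun _ => (1 : ℝ≥0∞)) ω :=
    Measurable.tsum fun n => measurable_const.indicator (hA (n + 1))
  have hk0 : (k : ℝ≥0∞) ≠ 0 := by simp; omega
  calc _ ≤ (k : ℝ≥0∞) ^ (-(p + 1)) * _ :=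
        meas_ge_le_rpow_neg_mul_lintegral_rpow hO.aemeasurable (by linarith) hk0
          (ENNReal.natCast_ne_top k)
    _ ≤ ENNReal.ofReal ((k : ℝ) ^ (-(p + 1))) * _ := by
        rw [← ENNReal.ofReal_natCast, ENNReal.ofReal_rpow_of_pos (by positivity)]
        gcongr
    _ = _ := (ENNReal.ofReal_mul (by positivity)).symm

/-- If `P(Aₙ) ≤ c·n^{-q}` with `c > 0`, `q > 1`, then for `0 < p < q - 2` the
overlap count `O = ∑_{n≥1} 1(Aₙ)` satisfies `E[O^{p+1}] ≤ c·q·ζ(q-p-1)` and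
`P(O ≥ k) ≤ k^{-(p+1)}·c·q·ζ(q-p-1)` for `k ≥ 1`. -/
theorem stmt1 {Ω : Type*} [MeasurableSpace Ω] (P : Measure Ω) [IsProbabilityMeasure P]
    (A : ℕ → Set Ω) (hA : ∀ n, MeasurableSet (A n))
    (c q : ℝ) (hc : 0 < c) (hq : 1 < q)
    (hbound : ∀ n : ℕ, 1 ≤ n → P (A n) ≤ ENNReal.ofReal (c * (n : ℝ) ^ (-q)))
    (p : ℝ) (hp : 0 < p) (hpq : p < q - 2) :
    (∫⁻ ω, (∑' n : ℕ, Set.indicator (A (n + 1)) (fun _ => (1 : ℝ≥0∞)) ω) ^ (p + 1) ∂P)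
        ≤ ENNReal.ofReal (c * q * ∑' n : ℕ, ((n : ℝ) + 1) ^ (-(q - p - 1))) ∧
    ∀ k : ℕ, 1 ≤ k →
      P {ω | (k : ℝ≥0∞) ≤ ∑' n : ℕ, Set.indicator (A (n + 1)) (fun _ => (1 : ℝ≥0∞)) ω}
        ≤ ENNReal.ofReal ((k : ℝ) ^ (-(p + 1)) *
            (c * q * ∑' n : ℕ, ((n : ℝ) + 1) ^ (-(q - p - 1)))) :=
  stmt1_general P A hA c q hc hbound p hp hpq
end

section
/- Let b ∈ (0,1), 0 ≤ p < -ln(b), and suppose P(A_m) ≤ M·b^m for some M > 0 and all m ≥ n_0. Let O := ∑_{m=n_0}^∞ 1(A_m). Then E[e^{pO}] ≤ 1 + M·b^{n_0 - 1}/(1 - e^p·b). -/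
open MeasureTheory ProbabilityTheory Set
open scoped ENNReal

/-!
If the events that occur have shifted indices `k₁ < ⋯ < k_O`, then `kⱼ ≥ j - 1`, so telescoping
`e^{pO} - 1 = ∑ⱼ (e^{pj} - e^{p(j-1)})` gives the pointwise bound
`e^{pO} ≤ 1 + (eᵖ - 1) ∑_{m occurs} e^{pm}`. Taking expectations turns the right-hand side into a
geometric series with ratio `eᵖ b < 1`, and `eᵖ - 1 < 1/b` accounts for the factor `b^{n₀-1}`.
The count is almost surely finite because `∑ P(Aₘ) < ∞`.
-/

/-- `e^{r·x}` for an extended-nonnegative count `x`, with value `⊤` at `x = ⊤`. -/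
noncomputable def eexp (r : ℝ) (x : ℝ≥0∞) : ℝ≥0∞ :=
  if x = ⊤ then ⊤ else ENNReal.ofReal (Real.exp (r * x.toReal))

open Finset in
theorem one_add_pow_card_le {R : Type*} [CommSemiring R] [PartialOrder R] [IsOrderedRing R]
    {c : R} (hc : 0 ≤ c) (T : Finset ℕ) :
    (1 + c) ^ #T ≤ 1 + c * ∑ m ∈ T, (1 + c) ^ m := by
  induction T using Finset.induction_on_max with
  | empty => simp
  | insert a s hlt ih =>
    have hcard : #s ≤ a := by simpa using Finset.card_le_card fun x hx => mem_range.2 (hlt x hx)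
    have hpow : (1 + c) ^ #s ≤ (1 + c) ^ a :=
      pow_le_pow_right₀ (le_add_of_nonneg_right hc) hcard
    have ha : a ∉ s := fun h => lt_irrefl a (hlt a h)
    rw [card_insert_of_notMem ha, sum_insert ha, pow_succ, mul_one_add, mul_add]
    calc (1 + c) ^ #s + (1 + c) ^ #s * c ≤ (1 + c * ∑ m ∈ s, (1 + c) ^ m) + c * (1 + c) ^ a := by
          rw [mul_comm _ c]; gcongr
      _ = 1 + (c * (1 + c) ^ a + c * ∑ m ∈ s, (1 + c) ^ m) := by ring

lemma eexp_natCast (p : ℝ) (k : ℕ) : eexp p k = ENNReal.ofReal (Real.exp p) ^ k := by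
  rw [eexp, if_neg (ENNReal.natCast_ne_top k), ENNReal.toReal_natCast, mul_comm,
    Real.exp_nat_mul, ENNReal.ofReal_pow (Real.exp_pos p).le]

lemma eexp_tsum_indicator_le {S : Set ℕ} (hS : S.Finite) {p : ℝ} (hp : 0 ≤ p) :
    eexp p (∑' m, S.indicator 1 m) ≤
      1 + (ENNReal.ofReal (Real.exp p) - 1) *
        ∑' m, ENNReal.ofReal (Real.exp p) ^ m * S.indicator 1 m := by
  simp_rw [← Set.indicator_mul_right, Pi.one_apply, mul_one]
  obtain ⟨T, rfl⟩ := hS.exists_finset_coe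
  have hr : 1 ≤ ENNReal.ofReal (Real.exp p) := by simpa using Real.one_le_exp hp
  rw [← sum_eq_tsum_indicator, ← sum_eq_tsum_indicator]
  simp only [Pi.one_apply, Finset.sum_const, nsmul_one, eexp_natCast]
  simpa [add_tsub_cancel_of_le hr] using
    one_add_pow_card_le (c := ENNReal.ofReal (Real.exp p) - 1) zero_le T

lemma tsum_indicator_one_finite_iff {S : Set ℕ} : ∑' m, S.indicator 1 m ≠ ∞ ↔ S.Finite := by
  rw [← tsum_subtype, Pi.one_def, ENNReal.tsum_set_one, Ne, ENat.toENNReal_eq_top, ← Ne,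
    Set.encard_ne_top_iff]

section Count

variable {Ω : Type*} [MeasurableSpace Ω] {P : Measure Ω} {B : ℕ → Set Ω}

lemma lintegral_tsum_indicator (hB : ∀ m, MeasurableSet (B m)) :
    ∫⁻ ω, ∑' m, (B m).indicator 1 ω ∂P = ∑' m, P (B m) := by
  rw [lintegral_tsum fun m => (measurable_one.indicator (hB m)).aemeasurable]
  simp_rw [lintegral_indicator_one (hB _)]

lemma ae_tsum_indicator_ne_top (hB : ∀ m, MeasurableSet (B m)) (hsum : ∑' m, P (B m) ≠ ∞) :
    ∀ᵐ ω ∂P, ∑' m, (B m).indicator 1 ω ≠ ∞ := by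
  refine (ae_lt_top (.tsum fun m => measurable_one.indicator (hB m)) ?_).mono
    fun _ h => h.ne
  rwa [lintegral_tsum_indicator hB]

lemma lintegral_eexp_tsum_indicator_le [IsProbabilityMeasure P] (hB : ∀ m, MeasurableSet (B m))
    (hsum : ∑' m, P (B m) ≠ ∞) {p : ℝ} (hp : 0 ≤ p) :
    ∫⁻ ω, eexp p (∑' m, (B m).indicator 1 ω) ∂P ≤
      1 + (ENNReal.ofReal (Real.exp p) - 1) * ∑' m, ENNReal.ofReal (Real.exp p) ^ m * P (B m) := by
  set r := ENNReal.ofReal (Real.exp p)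
  have hind : ∀ m, Measurable ((B m).indicator (1 : Ω → ℝ≥0∞)) :=
    fun m => measurable_one.indicator (hB m)
  calc ∫⁻ ω, eexp p (∑' m, (B m).indicator 1 ω) ∂P
      ≤ ∫⁻ ω, 1 + (r - 1) * ∑' m, r ^ m * (B m).indicator 1 ω ∂P := by
        refine lintegral_mono_ae ((ae_tsum_indicator_ne_top hB hsum).mono fun ω hω => ?_)
        exact eexp_tsum_indicator_le (S := {m | ω ∈ B m}) (tsum_indicator_one_finite_iff.1 hω) hp
    _ = 1 + (r - 1) * ∑' m, r ^ m * P (B m) := by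
        rw [lintegral_add_left measurable_const, lintegral_const, measure_univ, mul_one,
          lintegral_const_mul' _ _ (by simp [r]),
          lintegral_tsum fun m => ((hind m).const_mul _).aemeasurable]
        simp_rw [lintegral_const_mul _ (hind _), lintegral_indicator_one (hB _)]

end Count

section Geometric

variable {b C : ℝ} {μ : ℕ → ℝ≥0∞}

lemma tsum_ne_top_of_le_geometric (hb₀ : 0 ≤ b) (hb₁ : b < 1) (hC : 0 ≤ C)
    (hμ : ∀ m, μ m ≤ ENNReal.ofReal (C * b ^ m)) : ∑' m, μ m ≠ ∞ := by
  refine ne_top_of_le_ne_top ?_ (ENNReal.tsum_le_tsum hμ)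
  rw [← ENNReal.ofReal_tsum_of_nonneg (fun m => by positivity) 
    ((summable_geometric_of_lt_one hb₀ hb₁).mul_left C)]
  exact ENNReal.ofReal_ne_top

lemma exp_sub_one_mul_tsum_le {p : ℝ} (hp : 0 ≤ p) (hb₀ : 0 ≤ b) (hq : Real.exp p * b < 1)
    (hC : 0 ≤ C) (hμ : ∀ m, μ m ≤ ENNReal.ofReal (C * b ^ m)) :
    (ENNReal.ofReal (Real.exp p) - 1) * ∑' m, ENNReal.ofReal (Real.exp p) ^ m * μ m ≤
      ENNReal.ofReal ((Real.exp p - 1) * C / (1 - Real.exp p * b)) := by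
  have hq₀ : 0 ≤ Real.exp p * b := by positivity
  have he : 0 ≤ Real.exp p - 1 := by linarith [Real.one_le_exp hp]
  have hterm : ∀ m, ENNReal.ofReal (Real.exp p) ^ m * μ m ≤
      ENNReal.ofReal (C * (Real.exp p * b) ^ m) := fun m => by
    grw [hμ m, ← ENNReal.ofReal_pow (Real.exp_pos p).le, ← ENNReal.ofReal_mul (by positivity)]
    exact (congrArg ENNReal.ofReal (by ring)).le
  calc (ENNReal.ofReal (Real.exp p) - 1) * ∑' m, ENNReal.ofReal (Real.exp p) ^ m * μ m
      ≤ ENNReal.ofReal (Real.exp p - 1) * ∑' m, ENNReal.ofReal (C * (Real.exp p * b) ^ m) := by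
        rw [ENNReal.ofReal_sub _ zero_le_one, ENNReal.ofReal_one]
        gcongr with m
        exact hterm m
    _ = ENNReal.ofReal ((Real.exp p - 1) * C / (1 - Real.exp p * b)) := by
        rw [← ENNReal.ofReal_tsum_of_nonneg (fun m => by positivity)
            ((summable_geometric_of_lt_one hq₀ hq).mul_left C),
          ← ENNReal.ofReal_mul he, tsum_mul_left,
          tsum_geometric_of_lt_one hq₀ hq, mul_div_assoc, div_eq_mul_inv]

end Geometric

/-- If `P(Aₘ) ≤ M·bᵐ` for `m ≥ n₀` with `b ∈ (0,1)`, `M > 0`, and `0 ≤ p < -ln b`,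
then for the count `O = ∑_{m≥n₀} 1(Aₘ)` we have
`E[e^{pO}] ≤ 1 + M·b^{n₀-1}/(1 - eᵖ·b)`. -/
theorem stmt2 {Ω : Type*} [MeasurableSpace Ω] (P : Measure Ω) [IsProbabilityMeasure P]
    (A : ℕ → Set Ω) (hA : ∀ n, MeasurableSet (A n))
    (b M : ℝ) (hb : b ∈ Set.Ioo (0 : ℝ) 1) (hM : 0 < M) (n₀ : ℕ)
    (hbound : ∀ m : ℕ, n₀ ≤ m → P (A m) ≤ ENNReal.ofReal (M * b ^ m))
    (p : ℝ) (hp : 0 ≤ p) (hp' : p < -Real.log b) :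
    (∫⁻ ω, eexp p (∑' m : ℕ, Set.indicator (A (n₀ + m)) (fun _ => (1 : ℝ≥0∞)) ω) ∂P)
      ≤ ENNReal.ofReal (1 + M * b ^ ((n₀ : ℤ) - 1) / (1 - Real.exp p * b)) := by
  obtain ⟨hb₀, hb₁⟩ := hb
  have hexp : Real.exp p < b⁻¹ := by
    simpa [Real.exp_neg, Real.exp_log hb₀] using Real.exp_lt_exp.2 hp'
  have hq : Real.exp p * b < 1 := by
    simpa [inv_mul_cancel₀ hb₀.ne'] using mul_lt_mul_of_pos_right hexp hb₀
  have hC : 0 ≤ M * b ^ n₀ := by positivity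
  have hμ : ∀ m, P (A (n₀ + m)) ≤ ENNReal.ofReal (M * b ^ n₀ * b ^ m) := fun m => by
    rw [mul_assoc, ← pow_add]
    exact hbound _ (Nat.le_add_right _ _)
  have hconst : (Real.exp p - 1) * (M * b ^ n₀) ≤ M * b ^ ((n₀ : ℤ) - 1) :=
    calc (Real.exp p - 1) * (M * b ^ n₀) ≤ b⁻¹ * (M * b ^ n₀) := by gcongr; linarith
      _ = M * b ^ ((n₀ : ℤ) - 1) := by rw [zpow_sub_one₀ hb₀.ne', zpow_natCast]; ring
  calc ∫⁻ ω, eexp p (∑' m, (A (n₀ + m)).indicator 1 ω) ∂P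
      ≤ 1 + (ENNReal.ofReal (Real.exp p) - 1) *
          ∑' m, ENNReal.ofReal (Real.exp p) ^ m * P (A (n₀ + m)) :=
        lintegral_eexp_tsum_indicator_le (fun m => hA _)
          (tsum_ne_top_of_le_geometric hb₀.le hb₁ hC hμ) hp
    _ ≤ 1 + ENNReal.ofReal ((Real.exp p - 1) * (M * b ^ n₀) / (1 - Real.exp p * b)) := by
        gcongr
        exact exp_sub_one_mul_tsum_le hp hb₀.le hq hC hμ
    _ ≤ ENNReal.ofReal (1 + M * b ^ ((n₀ : ℤ) - 1) / (1 - Real.exp p * b)) := by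
        rw [ENNReal.ofReal_add zero_le_one (by have := sub_pos.2 hq; positivity),
          ENNReal.ofReal_one]
        gcongr
end

section
/- Let b ∈ (0,1), M ≥ 1, and suppose P(A_m) ≤ M·b^m for all m ≥ n_0, with O := ∑_{m=n_0}^∞ 1(A_m). Then for all k ≥ 1, P(O ≥ k) ≤ 2·e^{9/8}·[k·(M·b^{n_0-1} + 1) + 1]·b^k. -/
open MeasureTheory ProbabilityTheory Set
open scoped ENNReal

lemma key_real (b x D C : ℝ) (hb0 : 0 < b) (hb1 : b < 1) (hx0 : 0 ≤ x) (hx1 : x ≤ 1)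
    (hD : 0 ≤ D) (hC0 : 0 ≤ C) (hCb : D * (1 - b) ≤ C * b) (k : ℕ) (hk : 1 ≤ k)
    (hq : ∀ j < k, x ≤ D * b ^ j) :
    x ≤ 2 * ((k : ℝ) * C + k + 1) * b ^ k := by
  have hk0 : (0:ℝ) < k := by exact_mod_cast hk
  set t : ℝ := 1 - 1/(2*(k:ℝ)) with ht
  have hk1 : (1:ℝ) ≤ k := by exact_mod_cast hk
  have htlow : (1:ℝ)/2 ≤ t := by
    have h : 1/(2*(k:ℝ)) ≤ 1/2 := one_div_le_one_div_of_le two_pos (by linarith)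
    simp only [ht]; linarith
  have htk : (1:ℝ)/2 ≤ t ^ k := by
    have hker : -2 ≤ -(1/(2*(k:ℝ))) := by
      have : 1/(2*(k:ℝ)) ≤ 1/2 := by
        apply one_div_le_one_div_of_le two_pos; linarith
      linarith
    calc (1:ℝ)/2 = 1 + (k:ℝ) * (-(1/(2*(k:ℝ)))) := by field_simp; ring
      _ ≤ (1 + -(1/(2*(k:ℝ)))) ^ k := one_add_mul_le_pow hker k
      _ = t ^ k := by rw [ht]; ring_nf
  have ht1 : t < 1 := by
    have : 0 < 1/(2*(k:ℝ)) := by positivity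
    simp only [ht]; linarith
  have hbk : (0:ℝ) < b ^ k := pow_pos hb0 k
  by_cases hcase : t ≤ b
  · have hhalf : (1:ℝ)/2 ≤ b ^ k := htk.trans (pow_le_pow_left₀ (le_trans (by norm_num) htlow) hcase k)
    have h1 : 0 ≤ (k:ℝ) * C * b ^ k :=
      mul_nonneg (mul_nonneg hk0.le hC0) hbk.le
    have h2 : ((k:ℝ)+1) * (1/2) ≤ ((k:ℝ)+1) * b ^ k :=
      mul_le_mul_of_nonneg_left hhalf (by linarith)
    nlinarith
  · push_neg at hcase
    set r : ℝ := t / b with hr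
    have hr1 : 1 < r := (one_lt_div hb0).2 hcase
    have hgs : (r - 1) * (∑ j ∈ Finset.range k, r ^ j) = r ^ k - 1 := by
      have h := geom_sum_mul r k
      linarith [h]
    have hsum_x : ∑ j ∈ Finset.range k, r ^ j * x
        ≤ ∑ j ∈ Finset.range k, r ^ j * (D * b ^ j) := by
      apply Finset.sum_le_sum
      intro j hj
      exact mul_le_mul_of_nonneg_left (hq j (Finset.mem_range.1 hj))
        (pow_nonneg (by linarith) j)
    have hS : ∑ j ∈ Finset.range k, r ^ j * (D * b ^ j) ≤ (k:ℝ) * D := by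
      have hterm : ∀ j ∈ Finset.range k, r ^ j * (D * b ^ j) ≤ D := by
        intro j _
        have hrb : r ^ j * b ^ j = t ^ j := by
          rw [← mul_pow, hr, div_mul_cancel₀ _ hb0.ne']
        have htj : t ^ j ≤ 1 := pow_le_one₀ (by linarith) ht1.le
        calc r ^ j * (D * b ^ j) = D * (r ^ j * b ^ j) := by ring
          _ = D * t ^ j := by rw [hrb]
          _ ≤ D * 1 := mul_le_mul_of_nonneg_left htj hD
          _ = D := mul_one D
      calc ∑ j ∈ Finset.range k, r ^ j * (D * b ^ j)
          ≤ ∑ _j ∈ Finset.range k, D := Finset.sum_le_sum hterm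
        _ = (k:ℝ) * D := by simp [Finset.sum_const, mul_comm]
    have hA : r ^ k * x ≤ 1 + (r - 1) * ((k:ℝ) * D) := by
      have e1 : r ^ k * x = x + (r - 1) * (∑ j ∈ Finset.range k, r ^ j * x) := by
        have h2 : ∑ j ∈ Finset.range k, r ^ j * x
            = (∑ j ∈ Finset.range k, r ^ j) * x := (Finset.sum_mul _ _ _).symm
        rw [h2, ← mul_assoc, hgs]; ring
      rw [e1]
      have h2 : (r - 1) * (∑ j ∈ Finset.range k, r ^ j * x)
          ≤ (r - 1) * ((k:ℝ) * D) :=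
        mul_le_mul_of_nonneg_left (hsum_x.trans hS) (by linarith)
      linarith
    have hrD : (r - 1) * D ≤ C := by
      have hrb : (r - 1) * b = t - b := by
        rw [hr, sub_mul, div_mul_cancel₀ _ hb0.ne', one_mul]
      nlinarith [hD, hCb]
    have hA2 : r ^ k * x ≤ 1 + (k:ℝ) * C := by
      have : (r - 1) * ((k:ℝ) * D) = (k:ℝ) * ((r-1) * D) := by ring
      nlinarith [mul_le_mul_of_nonneg_left hrD hk0.le]
    have hrk : r ^ k = t ^ k / b ^ k := div_pow t b k
    have htx : t ^ k * x ≤ (1 + (k:ℝ) * C) * b ^ k := by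
      rw [hrk] at hA2
      have := mul_le_mul_of_nonneg_right hA2 hbk.le
      calc t ^ k * x = (t ^ k / b ^ k * x) * b ^ k := by field_simp
        _ ≤ (1 + (k:ℝ) * C) * b ^ k := this
    nlinarith [htk, hx0, mul_nonneg (mul_nonneg hk0.le hC0) hbk.le]

/-- If `P(Aₘ) ≤ M·bᵐ` for `m ≥ n₀` with `b ∈ (0,1)`, `M ≥ 1`, then for the count
`O = ∑_{m≥n₀} 1(Aₘ)` and all `k ≥ 1`:
`P(O ≥ k) ≤ 2·e^{9/8}·(k·(M·b^{n₀-1} + 1) + 1)·bᵏ`. -/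
theorem stmt3 {Ω : Type*} [MeasurableSpace Ω] (P : Measure Ω) [IsProbabilityMeasure P]
    (A : ℕ → Set Ω) (hA : ∀ n, MeasurableSet (A n))
    (b M : ℝ) (hb : b ∈ Set.Ioo (0 : ℝ) 1) (hM : 1 ≤ M) (n₀ : ℕ)
    (hbound : ∀ m : ℕ, n₀ ≤ m → P (A m) ≤ ENNReal.ofReal (M * b ^ m))
    (k : ℕ) (hk : 1 ≤ k) :
    P {ω | (k : ℝ≥0∞) ≤ ∑' m : ℕ, Set.indicator (A (n₀ + m)) (fun _ => (1 : ℝ≥0∞)) ω}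
      ≤ ENNReal.ofReal (2 * Real.exp (9 / 8) *
          ((k : ℝ) * (M * b ^ ((n₀ : ℤ) - 1) + 1) + 1) * b ^ k) := by

  obtain ⟨hb0, hb1⟩ := hb
  have hM0 : (0:ℝ) < M := lt_of_lt_of_le one_pos hM
  have h1b : (0:ℝ) < 1 - b := by linarith
  set T : Ω → ℝ≥0∞ := fun ω => ∑' m : ℕ, Set.indicator (A (n₀ + m)) (fun _ => (1 : ℝ≥0∞)) ω
    with hT
  -- union bound at level j+1
  have hE : ∀ j : ℕ, P {ω | ((j + 1 : ℕ) : ℝ≥0∞) ≤ T ω}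
      ≤ ENNReal.ofReal (M * b ^ (n₀ + j) / (1 - b)) := by
    intro j
    have hsub : {ω | ((j + 1 : ℕ) : ℝ≥0∞) ≤ T ω} ⊆ ⋃ m : ℕ, A (n₀ + j + m) := by
      intro ω hω
      by_contra hn
      simp only [Set.mem_iUnion, not_exists] at hn
      have hzero : ∀ m, m ∉ Finset.range j →
          Set.indicator (A (n₀ + m)) (fun _ => (1:ℝ≥0∞)) ω = 0 := by
        intro m hm
        have hjm : j ≤ m := Nat.le_of_not_lt (by simpa [Finset.mem_range] using hm)
        have : ω ∉ A (n₀ + m) := by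
          have := hn (m - j)
          rwa [show n₀ + j + (m - j) = n₀ + m by omega] at this
        simp [Set.indicator_of_notMem this]
      have hle : T ω ≤ (j : ℝ≥0∞) := by
        rw [hT]
        simp only
        rw [tsum_eq_sum hzero]
        calc ∑ m ∈ Finset.range j, Set.indicator (A (n₀ + m)) (fun _ => (1:ℝ≥0∞)) ω
            ≤ ∑ _m ∈ Finset.range j, (1:ℝ≥0∞) := by
              apply Finset.sum_le_sum
              intro m _
              by_cases h : ω ∈ A (n₀ + m) <;> simp [Set.indicator, h]
          _ = (j : ℝ≥0∞) := by simp
      have hcontra : ((j + 1 : ℕ) : ℝ≥0∞) ≤ (j : ℝ≥0∞) := le_trans hω hle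
      have : j + 1 ≤ j := by exact_mod_cast hcontra
      omega
    have hgsum : Summable (fun m : ℕ => M * b ^ (n₀ + j) * b ^ m) :=
      (summable_geometric_of_lt_one hb0.le hb1).mul_left _
    calc P {ω | ((j + 1 : ℕ) : ℝ≥0∞) ≤ T ω}
        ≤ P (⋃ m : ℕ, A (n₀ + j + m)) := measure_mono hsub
      _ ≤ ∑' m : ℕ, P (A (n₀ + j + m)) := measure_iUnion_le _
      _ ≤ ∑' m : ℕ, ENNReal.ofReal (M * b ^ (n₀ + j) * b ^ m) := by
          apply ENNReal.tsum_le_tsum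
          intro m
          have := hbound (n₀ + j + m) (by omega)
          rwa [show M * b ^ (n₀ + j + m) = M * b ^ (n₀ + j) * b ^ m by
            rw [pow_add]; ring] at this
      _ = ENNReal.ofReal (∑' m : ℕ, M * b ^ (n₀ + j) * b ^ m) := by
          rw [ENNReal.ofReal_tsum_of_nonneg (fun m => by positivity) hgsum]
      _ = ENNReal.ofReal (M * b ^ (n₀ + j) / (1 - b)) := by
          rw [tsum_mul_left, tsum_geometric_of_lt_one hb0.le hb1, div_eq_mul_inv]
  set S : Set Ω := {ω | (k : ℝ≥0∞) ≤ T ω} with hS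
  set x : ℝ := (P S).toReal with hx
  have hx0 : 0 ≤ x := ENNReal.toReal_nonneg
  have hx1 : x ≤ 1 := by
    calc x ≤ (1 : ℝ≥0∞).toReal := ENNReal.toReal_mono ENNReal.one_ne_top prob_le_one
      _ = 1 := by simp
  set D : ℝ := M * b ^ n₀ / (1 - b) with hD
  set C : ℝ := M * b ^ ((n₀ : ℤ) - 1) with hC
  have hDnn : 0 ≤ D := by positivity
  have hCnn : 0 ≤ C := by positivity
  have hCb : D * (1 - b) ≤ C * b := by
    have : C * b = M * b ^ n₀ := by
      rw [hC, mul_assoc, ← zpow_natCast b n₀, ← zpow_add_one₀ hb0.ne']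
      norm_num
    rw [this, hD, div_mul_cancel₀ _ h1b.ne']
  have hq : ∀ j < k, x ≤ D * b ^ j := by
    intro j hj
    have hmono : P S ≤ P {ω | ((j + 1 : ℕ) : ℝ≥0∞) ≤ T ω} := by
      apply measure_mono
      intro ω hω
      exact le_trans ((Nat.cast_le (α := ℝ≥0∞)).mpr (show j + 1 ≤ k by omega)) hω
    have hPx : P S ≤ ENNReal.ofReal (D * b ^ j) := by
      refine le_trans (hmono.trans (hE j)) (le_of_eq ?_)
      congr 1
      rw [hD, pow_add]; ring
    exact ENNReal.toReal_le_of_le_ofReal (by positivity) hPx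
  have hkey : x ≤ 2 * ((k : ℝ) * C + k + 1) * b ^ k :=
    key_real b x D C hb0 hb1 hx0 hx1 hDnn hCnn hCb k hk hq
  have hfin : x ≤ 2 * Real.exp (9 / 8) *
      ((k : ℝ) * (M * b ^ ((n₀ : ℤ) - 1) + 1) + 1) * b ^ k := by
    have hexp : (1:ℝ) ≤ Real.exp (9 / 8) := Real.one_le_exp (by norm_num)
    have heq : (k : ℝ) * (M * b ^ ((n₀ : ℤ) - 1) + 1) + 1 = (k:ℝ) * C + k + 1 := by
      rw [hC]; ring
    rw [heq]
    have hcoef : (0:ℝ) ≤ ((k:ℝ) * C + k + 1) * b ^ k := by positivity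
    nlinarith [mul_le_mul_of_nonneg_right
      (mul_le_mul_of_nonneg_right hexp (by positivity : (0:ℝ) ≤ 2)) hcoef]
  calc P S = ENNReal.ofReal x := (ENNReal.ofReal_toReal (measure_ne_top P S)).symm
    _ ≤ _ := ENNReal.ofReal_le_ofReal hfin
end

section
/- Let (E_n)_{n∈ℕ₀} be independent events, O_N := ∑_{n=N+1}^∞ 1(E_n), and C_N := ∑_{n=N}^∞ P(E_n). Suppose C_{N+1} < 1. Then for any r < -ln(C_{N+1}), E[e^{r·O_N}] ≤ 1 + C_{N+1}·e^r/(1 - C_{N+1}·e^r). -/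
/-!
The tail count `O` is at least `k` only if some `k` distinct tail events occur simultaneously, so
a union bound over `k`-tuples together with independence gives `P(O ≥ k) ≤ Cᵏ` with `C = C_{N+1}`.
Borel–Cantelli makes `O` a.s. finite, and summing `e^{rk} P(O ≥ k)` over `k` yields the geometric
series `∑ₖ (C eʳ)ᵏ = 1 / (1 - C eʳ) = 1 + C eʳ / (1 - C eʳ)`, finite because `r < -ln C`.
-/

open MeasureTheory ProbabilityTheory Set
open scoped ENNReal

open Function

theorem ENNReal.tsum_fin_prod_eq_pow {α : Type*} (f : α → ℝ≥0∞) (k : ℕ) :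
    ∑' v : Fin k → α, ∏ i, f (v i) = (∑' a, f a) ^ k := by
  induction k with
  | zero => simp
  | succ k ih =>
    rw [← (Fin.consEquiv fun _ => α).tsum_eq, ENNReal.tsum_prod', pow_succ', ← ih,
      ← ENNReal.tsum_mul_right]
    simp [Fin.consEquiv, Fin.prod_univ_succ, ENNReal.tsum_mul_left]

theorem Set.exists_injective_fin_of_le_encard {α : Type*} {s : Set α} {k : ℕ}
    (h : (k : ℕ∞) ≤ s.encard) : ∃ v : Fin k → α, Injective v ∧ ∀ i, v i ∈ s := by
  obtain ⟨t, hts, htk⟩ := Set.exists_subset_encard_eq h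
  obtain ⟨u, rfl⟩ := (Set.finite_of_encard_eq_coe htk).exists_finset_coe
  obtain rfl : u.card = k := by simpa using htk
  exact ⟨fun i => u.equivFin.symm i, fun i j hij => u.equivFin.symm.injective (Subtype.ext hij),
    fun i => hts (u.equivFin.symm i).2⟩

theorem tsum_indicator_one_eq_encard {ι Ω : Type*} (A : ι → Set Ω) (ω : Ω) :
    ∑' i, (A i).indicator (fun _ => (1 : ℝ≥0∞)) ω = ({i | ω ∈ A i}.encard : ℝ≥0∞) := by
  rw [← ENNReal.tsum_set_one, tsum_subtype _ fun _ => (1 : ℝ≥0∞)]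
  rfl

section

variable {Ω : Type*} [MeasurableSpace Ω] {P : Measure Ω}

theorem ProbabilityTheory.iIndepSet.measure_natCast_le_tsum_indicator_le_pow {ι : Type*}
    [Countable ι] {A : ι → Set Ω} (hA : iIndepSet A P) (k : ℕ) :
    P {ω | (k : ℝ≥0∞) ≤ ∑' i, (A i).indicator (fun _ => (1 : ℝ≥0∞)) ω}
      ≤ (∑' i, P (A i)) ^ k := by
  have hcover : {ω | (k : ℝ≥0∞) ≤ ∑' i, (A i).indicator (fun _ => (1 : ℝ≥0∞)) ω}
      ⊆ ⋃ v : {v : Fin k → ι // Injective v}, ⋂ j, A (v.1 j) := by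
    intro ω hω
    rw [Set.mem_ofPred_eq, tsum_indicator_one_eq_encard, ← ENat.toENNReal_coe,
      ENat.toENNReal_le] at hω
    obtain ⟨v, hv, hvA⟩ := Set.exists_injective_fin_of_le_encard hω
    exact Set.mem_iUnion.2 ⟨⟨v, hv⟩, Set.mem_iInter.2 hvA⟩
  calc _ ≤ P (⋃ v : {v : Fin k → ι // Injective v}, ⋂ j, A (v.1 j)) := measure_mono hcover
    _ ≤ ∑' v : {v : Fin k → ι // Injective v}, P (⋂ j, A (v.1 j)) := measure_iUnion_le _
    _ = ∑' v : {v : Fin k → ι // Injective v}, ∏ j, P (A (v.1 j)) :=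
      tsum_congr fun v => by simpa using (hA.precomp v.2).meas_biInter Finset.univ
    _ ≤ ∑' v : Fin k → ι, ∏ j, P (A (v j)) :=
      ENNReal.tsum_comp_le_tsum_of_injective Subtype.val_injective _
    _ = (∑' i, P (A i)) ^ k := ENNReal.tsum_fin_prod_eq_pow (fun i => P (A i)) k

-- For integer `X`, `e^{rX}` is the `k = X` term of `∑ₖ (eʳ)ᵏ 1{k ≤ X}`.
theorem lintegral_eexp_le_of_tail_le_pow {X : Ω → ℝ≥0∞} (hX : Measurable X)
    (hX_nat : ∀ᵐ ω ∂P, ∃ m : ℕ, X ω = m) {q : ℝ≥0∞}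
    (htail : ∀ k : ℕ, P {ω | (k : ℝ≥0∞) ≤ X ω} ≤ q ^ k) (r : ℝ) :
    ∫⁻ ω, eexp r (X ω) ∂P ≤ (1 - ENNReal.ofReal (Real.exp r) * q)⁻¹ := by
  set c := ENNReal.ofReal (Real.exp r)
  set T : ℕ → Set Ω := fun k => {ω | (k : ℝ≥0∞) ≤ X ω}
  have hT : ∀ k, MeasurableSet (T k) := fun k => measurableSet_le measurable_const hX
  have hpt : ∀ᵐ ω ∂P, eexp r (X ω) ≤ ∑' k, (T k).indicator (fun _ => c ^ k) ω := by
    filter_upwards [hX_nat] with ω ⟨m, hm⟩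
    calc eexp r (X ω) = (T m).indicator (fun _ => c ^ m) ω := by
          rw [Set.indicator_of_mem (by simp [T, hm]), hm, eexp, if_neg (ENNReal.natCast_ne_top m),
            ENNReal.toReal_natCast, mul_comm, Real.exp_nat_mul,
            ENNReal.ofReal_pow (Real.exp_pos r).le]
      _ ≤ _ := ENNReal.le_tsum m
  calc ∫⁻ ω, eexp r (X ω) ∂P ≤ ∫⁻ ω, ∑' k, (T k).indicator (fun _ => c ^ k) ω ∂P :=
        lintegral_mono_ae hpt
    _ = ∑' k, c ^ k * P (T k) := by
        rw [lintegral_tsum fun k => (measurable_const.indicator (hT k)).aemeasurable]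
        simp_rw [lintegral_indicator_const (hT _)]
    _ ≤ ∑' k, (c * q) ^ k := by
        gcongr with k
        rw [mul_pow]
        gcongr
        exact htail k
    _ = (1 - c * q)⁻¹ := ENNReal.tsum_geometric _

end

theorem Real.mul_exp_lt_one_of_lt_neg_log {C r : ℝ} (hC : 0 ≤ C) (hr : r < -Real.log C) :
    C * Real.exp r < 1 := by
  rcases hC.eq_or_lt with rfl | hC
  · simp
  calc C * Real.exp r < C * Real.exp (-Real.log C) := by gcongr
    _ = 1 := by rw [Real.exp_neg, Real.exp_log hC, mul_inv_cancel₀ hC.ne']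

theorem stmt7_general {Ω : Type*} [MeasurableSpace Ω] (P : Measure Ω)
    (E : ℕ → Set Ω) (hE : ∀ n, MeasurableSet (E n))
    (hind : iIndepSet E P) (N : ℕ)
    (hC1 : (∑' n : ℕ, P (E (N + 1 + n))) < 1)
    (C : ℝ) (hCdef : C = (∑' n : ℕ, P (E (N + 1 + n))).toReal)
    (r : ℝ) (hr : r < -Real.log C) :
    (∫⁻ ω, eexp r (∑' n : ℕ, Set.indicator (E (N + 1 + n)) (fun _ => (1 : ℝ≥0∞)) ω) ∂P)
      ≤ ENNReal.ofReal (1 + C * Real.exp r / (1 - C * Real.exp r)) := by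
  have htail_ind : iIndepSet (fun n => E (N + 1 + n)) P :=
    hind.precomp fun _ _ h => Nat.add_left_cancel h
  have hC0 : 0 ≤ C := hCdef ▸ ENNReal.toReal_nonneg
  have hx1 : C * Real.exp r < 1 := Real.mul_exp_lt_one_of_lt_neg_log hC0 hr
  have hX_nat : ∀ᵐ ω ∂P, ∃ m : ℕ,
      ∑' n, (E (N + 1 + n)).indicator (fun _ => (1 : ℝ≥0∞)) ω = m := by
    filter_upwards [ae_finite_setOfPred_mem hC1.ne_top] with ω hfin
    exact ⟨_, by rw [tsum_indicator_one_eq_encard, ← hfin.cast_ncard_eq, ENat.toENNReal_coe]⟩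
  refine (lintegral_eexp_le_of_tail_le_pow
    (Measurable.tsum fun n => measurable_const.indicator (hE _)) hX_nat
    htail_ind.measure_natCast_le_tsum_indicator_le_pow r).trans_eq ?_
  have h1x : 0 < 1 - C * Real.exp r := by linarith
  rw [show 1 + C * Real.exp r / (1 - C * Real.exp r) = (1 - C * Real.exp r)⁻¹ by
      field_simp; ring, ENNReal.ofReal_inv_of_pos h1x, ENNReal.ofReal_sub _ (by positivity),
    ENNReal.ofReal_one, ENNReal.ofReal_mul hC0, hCdef, ENNReal.ofReal_toReal hC1.ne_top, mul_comm]

/-- For independent events `(Eₙ)` with tail count `O_N = ∑_{n>N} 1(Eₙ)` and tail sum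
`C_{N+1} = ∑_{n≥N+1} P(Eₙ) < 1`, for any `r < -ln C_{N+1}`:
`E[e^{r·O_N}] ≤ 1 + C_{N+1}·eʳ/(1 - C_{N+1}·eʳ)`. -/
theorem stmt7 {Ω : Type*} [MeasurableSpace Ω] (P : Measure Ω) [IsProbabilityMeasure P]
    (E : ℕ → Set Ω) (hE : ∀ n, MeasurableSet (E n))
    (hind : iIndepSet E P) (N : ℕ)
    (hC1 : (∑' n : ℕ, P (E (N + 1 + n))) < 1)
    (C : ℝ) (hCdef : C = (∑' n : ℕ, P (E (N + 1 + n))).toReal)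
    (r : ℝ) (hr : r < -Real.log C) :
    (∫⁻ ω, eexp r (∑' n : ℕ, Set.indicator (E (N + 1 + n)) (fun _ => (1 : ℝ≥0∞)) ω) ∂P)
      ≤ ENNReal.ofReal (1 + C * Real.exp r / (1 - C * Real.exp r)) :=
  stmt7_general P E hE hind N hC1 C hCdef r hr
end

section
/- Let (W_t)_{t∈[0,1]} be a standard Brownian motion. For each n ∈ ℕ let E_n := ⋂_{i=0}^{n-1} {W_{(i+1)/n} - W_{i/n} ≥ 0}. Then P(E_n) = 2^{-n}, and for the count O := ∑_{n=0}^∞ 1(E_n) one has, for all 0 ≤ p < ln 2, E[e^{pO}] ≤ 4/(2 - e^p) + 1, and for all k ≥ 1, P(O ≥ k) ≤ 2·e^{9/8}·(3k + 1)·2^{-k}. -/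
open MeasureTheory ProbabilityTheory Set
open scoped ENNReal NNReal

/-- A standard (scalar) Brownian motion on a probability space: measurable marginals,
starts at `0`, a.s. continuous paths, Gaussian increments `W_t - W_s ∼ N(0, t-s)` and
independent increments over any monotone sequence of times. -/
structure IsBrownianMotion {Ω : Type*} [MeasurableSpace Ω] (P : Measure Ω)
    (W : ℝ → Ω → ℝ) : Prop where
  meas : ∀ t, Measurable (W t)
  init : ∀ᵐ ω ∂P, W 0 ω = 0
  cont : ∀ᵐ ω ∂P, Continuous fun t => W t ω
  incr_law : ∀ s t : ℝ, s ≤ t →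
    Measure.map (fun ω => W t ω - W s ω) P = gaussianReal 0 (Real.toNNReal (t - s))
  indep_incr : ∀ (n : ℕ) (t : ℕ → ℝ), Monotone t →
    iIndepFun
      (fun (i : Fin n) ω => W (t (i + 1)) ω - W (t i) ω) P

/-!
The `n` increments of `W` along the grid `{i/n}` are independent centred Gaussians of positive
variance, so each is nonnegative with probability `1/2` and `P(Eₙ) = 2⁻ⁿ`. If `O ≥ k + 1`, some
`Eₙ` with `n ≥ k` occurs, whence `P(O ≥ k + 1) ≤ ∑_{n ≥ k} 2⁻ⁿ = 2 · 2⁻ᵏ`. As `∑ₙ P(Eₙ) < ∞`,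
`O` is a.s. a natural number, and summation by parts gives
`E[e^{pO}] = 1 + ∑ₖ (e^{p(k+1)} - e^{pk}) P(O ≥ k + 1) ≤ 1 + 4(eᵖ - 1)/(2 - eᵖ)`.
-/

lemma gaussianReal_Ici_zero {v : ℝ≥0} (hv : v ≠ 0) : gaussianReal 0 v (Ici 0) = 1 / 2 := by
  set γ := gaussianReal 0 v
  have h_symm : γ (Ici 0) = γ (Iic 0) := by
    have h_neg : γ.map (fun x => -x) = γ := by simpa using gaussianReal_map_neg (μ := 0) (v := v)
    conv_lhs => rw [← h_neg, Measure.map_apply measurable_neg measurableSet_Ici]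
    simp
  have h_compl : γ (Iic 0) + γ (Ioi 0) = 1 := by
    rw [← compl_Iic, measure_add_measure_compl measurableSet_Iic, measure_univ]
  have h_atom : γ (Ioi 0) = γ (Ici 0) :=
    measure_congr ((gaussianReal_absolutelyContinuous 0 hv).ae_le Ioi_ae_eq_Ici)
  rw [ENNReal.eq_div_iff two_ne_zero ENNReal.ofNat_ne_top, two_mul, ← h_compl, h_atom, ← h_symm]

def nondecreasingOnGrid {Ω : Type*} (W : ℝ → Ω → ℝ) (n : ℕ) : Set Ω :=
  ⋂ i ∈ Finset.range n, {ω | 0 ≤ W (((i : ℝ) + 1) / (n : ℝ)) ω - W ((i : ℝ) / (n : ℝ)) ω}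

namespace IsBrownianMotion

variable {Ω : Type*} [MeasurableSpace Ω] {P : Measure Ω} {W : ℝ → Ω → ℝ}

lemma measure_increment_nonneg (hW : IsBrownianMotion P W) {s t : ℝ} (hst : s < t) :
    P ((fun ω => W t ω - W s ω) ⁻¹' Ici 0) = 1 / 2 := by
  rw [← Measure.map_apply (f := fun ω => W t ω - W s ω) ((hW.meas t).sub (hW.meas s))
    measurableSet_Ici, hW.incr_law s t hst.le,
    gaussianReal_Ici_zero (Real.toNNReal_pos.mpr (sub_pos.mpr hst)).ne']

lemma measurableSet_nondecreasingOnGrid (hW : IsBrownianMotion P W) (n : ℕ) :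
    MeasurableSet (nondecreasingOnGrid W n) :=
  .biInter (Finset.range n).countable_toSet fun _ _ =>
    measurableSet_le measurable_const ((hW.meas _).sub (hW.meas _))

lemma measure_nondecreasingOnGrid (hW : IsBrownianMotion P W) (n : ℕ) :
    P (nondecreasingOnGrid W n) = (1 / 2) ^ n := by
  set t : ℕ → ℝ := fun i => i / n
  have ht : Monotone t := fun i j hij => by
    simp only [t]; gcongr
  have h_grid : nondecreasingOnGrid W n =
      ⋂ i : Fin n, (fun ω => W (t (i + 1)) ω - W (t i) ω) ⁻¹' Ici 0 := by
    ext ω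
    simp [nondecreasingOnGrid, t, Fin.forall_iff]
  rw [h_grid, (hW.indep_incr n t ht).meas_iInter fun _ => ⟨Ici 0, measurableSet_Ici, rfl⟩]
  have h_step (i : Fin n) : t i < t (i + 1) := by
    simp only [t]
    gcongr
    · exact Nat.cast_pos.mpr (Nat.zero_lt_of_lt i.isLt)
    · simp
  rw [Finset.prod_congr rfl fun i _ => hW.measure_increment_nonneg (h_step i), Finset.prod_const,
    Finset.card_univ, Fintype.card_fin]

end IsBrownianMotion

section OccurrenceCount

variable {Ω : Type*} {E : ℕ → Set Ω}

noncomputable def occurrenceCount (E : ℕ → Set Ω) (ω : Ω) : ℝ≥0∞ :=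
  ∑' n, (E n).indicator (fun _ => 1) ω

lemma occurrenceCount_eq_encard (ω : Ω) : occurrenceCount E ω = {n | ω ∈ E n}.encard := by
  rw [occurrenceCount, ← ENNReal.tsum_set_one, tsum_subtype {n | ω ∈ E n} fun _ => 1]
  rfl

lemma exists_le_mem_of_le_occurrenceCount {ω : Ω} {k : ℕ}
    (h : ((k + 1 : ℕ) : ℝ≥0∞) ≤ occurrenceCount E ω) : ∃ n, k ≤ n ∧ ω ∈ E n := by
  by_contra! h_small
  have h_sub : {n | ω ∈ E n} ⊆ (Finset.range k : Set ℕ) := fun n hn => by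
    by_contra h_not
    exact h_small n (by simpa using h_not) hn
  have h_card := encard_le_encard h_sub
  rw [encard_coe_eq_coe_finsetCard, Finset.card_range] at h_card
  rw [occurrenceCount_eq_encard] at h
  have h_le : ((k + 1 : ℕ) : ℝ≥0∞) ≤ k := h.trans (ENat.toENNReal_le.mpr h_card)
  exact absurd (Nat.cast_le.mp h_le) (by omega)

variable [MeasurableSpace Ω] {μ : Measure Ω}

lemma measurable_occurrenceCount (hE : ∀ n, MeasurableSet (E n)) :
    Measurable (occurrenceCount E) :=
  .tsum fun n => measurable_const.indicator (hE n)

lemma lintegral_occurrenceCount (hE : ∀ n, MeasurableSet (E n)) :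
    ∫⁻ ω, occurrenceCount E ω ∂μ = ∑' n, μ (E n) := by
  simp only [occurrenceCount]
  rw [lintegral_tsum fun n => (measurable_const.indicator (hE n)).aemeasurable]
  simp [lintegral_indicator_const (hE _)]

lemma ae_exists_natCast_eq_occurrenceCount (hE : ∀ n, MeasurableSet (E n))
    (h_sum : ∑' n, μ (E n) ≠ ∞) : ∀ᵐ ω ∂μ, ∃ m : ℕ, occurrenceCount E ω = m := by
  have h_fin :=
    ae_lt_top (measurable_occurrenceCount hE) ((lintegral_occurrenceCount hE).trans_ne h_sum)
  filter_upwards [h_fin] with ω hω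
  rw [occurrenceCount_eq_encard, ENat.toENNReal_lt_top, lt_top_iff_ne_top,
    ENat.ne_top_iff_exists] at hω
  obtain ⟨m, hm⟩ := hω
  exact ⟨m, by rw [occurrenceCount_eq_encard, ← hm, ENat.toENNReal_coe]⟩

lemma measure_le_occurrenceCount_le {r : ℝ≥0∞} (hE : ∀ n, μ (E n) ≤ r ^ n) (k : ℕ) :
    μ {ω | ((k + 1 : ℕ) : ℝ≥0∞) ≤ occurrenceCount E ω} ≤ r ^ k * (1 - r)⁻¹ :=
  calc μ {ω | ((k + 1 : ℕ) : ℝ≥0∞) ≤ occurrenceCount E ω}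
      ≤ μ (⋃ j, E (k + j)) := measure_mono fun ω hω => by
        obtain ⟨n, hkn, hn⟩ := exists_le_mem_of_le_occurrenceCount hω
        exact mem_iUnion.mpr ⟨n - k, by rwa [Nat.add_sub_cancel' hkn]⟩
    _ ≤ ∑' j, r ^ (k + j) := (measure_iUnion_le _).trans (ENNReal.tsum_le_tsum fun j => hE _)
    _ = r ^ k * (1 - r)⁻¹ := by simp_rw [pow_add, ENNReal.tsum_mul_left, ENNReal.tsum_geometric]

lemma lintegral_eq_add_tsum_of_ae_natCast {X f : Ω → ℝ≥0∞} (hX : Measurable X) {φ : ℕ → ℝ≥0∞}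
    (hφ : Monotone φ) (h : ∀ᵐ ω ∂μ, ∃ m : ℕ, X ω = m ∧ f ω = φ m) :
    ∫⁻ ω, f ω ∂μ =
      φ 0 * μ univ + ∑' k : ℕ, (φ (k + 1) - φ k) * μ {ω | ((k + 1 : ℕ) : ℝ≥0∞) ≤ X ω} := by
  have h_level (k : ℕ) : MeasurableSet {ω | ((k + 1 : ℕ) : ℝ≥0∞) ≤ X ω} :=
    measurableSet_le measurable_const hX
  have h_telescope_sum (m : ℕ) : φ 0 + ∑ k ∈ Finset.range m, (φ (k + 1) - φ k) = φ m := by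
    induction m with
    | zero => simp
    | succ m ih =>
      rw [Finset.sum_range_succ, ← add_assoc, ih, add_tsub_cancel_of_le (hφ m.le_succ)]
  have h_telescope : f =ᵐ[μ] fun ω => φ 0 + ∑' k : ℕ,
      {ω | ((k + 1 : ℕ) : ℝ≥0∞) ≤ X ω}.indicator (fun _ => φ (k + 1) - φ k) ω := by
    filter_upwards [h] with ω ⟨m, hXm, hfm⟩
    have h_ind (k : ℕ) : {ω | ((k + 1 : ℕ) : ℝ≥0∞) ≤ X ω}.indicator (fun _ => φ (k + 1) - φ k) ω =
        (Finset.range m : Set ℕ).indicator (fun k => φ (k + 1) - φ k) k := by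
      simp only [indicator, mem_ofPred_eq, hXm, Nat.cast_le, Nat.succ_le_iff, Finset.coe_range,
        mem_Iio]
    rw [hfm, tsum_congr h_ind, ← sum_eq_tsum_indicator, h_telescope_sum]
  rw [lintegral_congr_ae h_telescope, lintegral_add_left measurable_const, lintegral_const,
    lintegral_tsum fun k => (measurable_const.indicator (h_level k)).aemeasurable]
  simp_rw [lintegral_indicator_const (h_level _)]

lemma tsum_ofReal_pow_sub_mul_le {a : ℝ} (ha1 : 1 ≤ a) (ha2 : a < 2) {u : ℕ → ℝ≥0∞}
    (hu : ∀ k, u k ≤ 2 * (1 / 2) ^ k) :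
    ∑' k : ℕ, (ENNReal.ofReal (a ^ (k + 1)) - ENNReal.ofReal (a ^ k)) * u k
      ≤ ENNReal.ofReal (4 / (2 - a)) := by
  have h_term (k : ℕ) : (ENNReal.ofReal (a ^ (k + 1)) - ENNReal.ofReal (a ^ k)) * u k
      ≤ ENNReal.ofReal (2 * (a - 1) * (a / 2) ^ k) := by
    have h_incr : 0 ≤ a ^ (k + 1) - a ^ k := sub_nonneg.mpr (pow_le_pow_right₀ ha1 k.le_succ)
    have h_half : ENNReal.ofReal (2 * (1 / 2) ^ k) = 2 * (1 / 2) ^ k := by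
      rw [ENNReal.ofReal_mul zero_le_two, ENNReal.ofReal_pow (by norm_num),
        ENNReal.ofReal_div_of_pos two_pos]
      norm_num
    calc _ ≤ ENNReal.ofReal (a ^ (k + 1) - a ^ k) * ENNReal.ofReal (2 * (1 / 2) ^ k) := by
          rw [ENNReal.ofReal_sub _ (by positivity), h_half]
          gcongr
          exact hu k
      _ = ENNReal.ofReal (2 * (a - 1) * (a / 2) ^ k) := by
          rw [← ENNReal.ofReal_mul h_incr]
          congr 1
          field_simp
          ring
  have h_geom : HasSum (fun k : ℕ => 2 * (a - 1) * (a / 2) ^ k) (4 * (a - 1) / (2 - a)) := by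
    have h := (hasSum_geometric_of_lt_one (r := a / 2) (by positivity) (by linarith)).mul_left
      (2 * (a - 1))
    rwa [show 2 * (a - 1) * (1 - a / 2)⁻¹ = 4 * (a - 1) / (2 - a) by
      rw [show 1 - a / 2 = (2 - a) / 2 by ring, inv_div]; ring] at h
  calc _ ≤ ∑' k : ℕ, ENNReal.ofReal (2 * (a - 1) * (a / 2) ^ k) := ENNReal.tsum_le_tsum h_term
    _ = ENNReal.ofReal (4 * (a - 1) / (2 - a)) := by
        rw [← ENNReal.ofReal_tsum_of_nonneg (fun k => by have := ha1; positivity) h_geom.summable,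
          h_geom.tsum_eq]
    _ ≤ ENNReal.ofReal (4 / (2 - a)) := by
        gcongr
        linarith

lemma lintegral_exp_mul_occurrenceCount_le [IsProbabilityMeasure μ]
    (hE_meas : ∀ n, MeasurableSet (E n)) (hE : ∀ n, μ (E n) ≤ (1 / 2) ^ n) {p : ℝ} (hp0 : 0 ≤ p)
    (hp : p < Real.log 2) :
    ∫⁻ ω, (if occurrenceCount E ω = ⊤ then ⊤ else
        ENNReal.ofReal (Real.exp (p * (occurrenceCount E ω).toReal))) ∂μ
      ≤ ENNReal.ofReal (4 / (2 - Real.exp p) + 1) := by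
  set a := Real.exp p
  have ha1 : 1 ≤ a := Real.one_le_exp hp0
  have ha2 : a < 2 := (Real.lt_log_iff_exp_lt two_pos).mp hp
  have h_sum : ∑' n, μ (E n) ≠ ∞ :=
    ne_top_of_le_ne_top (by simp [ENNReal.tsum_geometric]) (ENNReal.tsum_le_tsum hE)
  have h_nat : ∀ᵐ ω ∂μ, ∃ m : ℕ, occurrenceCount E ω = m ∧
      (if occurrenceCount E ω = ⊤ then ⊤ else
        ENNReal.ofReal (Real.exp (p * (occurrenceCount E ω).toReal))) = ENNReal.ofReal (a ^ m) := by
    filter_upwards [ae_exists_natCast_eq_occurrenceCount hE_meas h_sum] with ω ⟨m, hm⟩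
    refine ⟨m, hm, ?_⟩
    simp [hm, a, ← Real.exp_nat_mul, mul_comm]
  have hφ : Monotone fun m : ℕ => ENNReal.ofReal (a ^ m) :=
    fun m n hmn => ENNReal.ofReal_le_ofReal (pow_le_pow_right₀ ha1 hmn)
  rw [lintegral_eq_add_tsum_of_ae_natCast (measurable_occurrenceCount hE_meas) hφ h_nat, pow_zero,
    ENNReal.ofReal_one, measure_univ, one_mul, add_comm (4 / (2 - a)),
    ENNReal.ofReal_add zero_le_one (div_nonneg zero_le_four (by linarith)), ENNReal.ofReal_one]
  gcongr
  exact tsum_ofReal_pow_sub_mul_le ha1 ha2 fun k =>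
    (measure_le_occurrenceCount_le hE k).trans_eq (by norm_num [mul_comm])

end OccurrenceCount

/-- Loss of monotonicity of Brownian paths: with
`Eₙ = ⋂_{i<n} {W_{(i+1)/n} - W_{i/n} ≥ 0}` one has `P(Eₙ) = 2^{-n}`, the count
`O = ∑ₙ 1(Eₙ)` has `E[e^{pO}] ≤ 4/(2-eᵖ) + 1` for `0 ≤ p < ln 2`, and
`P(O ≥ k) ≤ 2·e^{9/8}·(3k+1)·2^{-k}` for `k ≥ 1`. -/
theorem stmt12 {Ω : Type*} [MeasurableSpace Ω] (P : Measure Ω) [IsProbabilityMeasure P]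
    (W : ℝ → Ω → ℝ) (hW : IsBrownianMotion P W) :
    (∀ n : ℕ, P (⋂ i ∈ Finset.range n,
        {ω | 0 ≤ W (((i : ℝ) + 1) / (n : ℝ)) ω - W ((i : ℝ) / (n : ℝ)) ω})
        = ((1 : ℝ≥0∞) / 2) ^ n) ∧
    (∀ p : ℝ, 0 ≤ p → p < Real.log 2 →
      (∫⁻ ω, (if (∑' n : ℕ, Set.indicator (⋂ i ∈ Finset.range n,
              {ω' | 0 ≤ W (((i : ℝ) + 1) / (n : ℝ)) ω' - W ((i : ℝ) / (n : ℝ)) ω'})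
              (fun _ => (1 : ℝ≥0∞)) ω) = ⊤ then ⊤ else
            ENNReal.ofReal (Real.exp (p * (∑' n : ℕ, Set.indicator (⋂ i ∈ Finset.range n,
              {ω' | 0 ≤ W (((i : ℝ) + 1) / (n : ℝ)) ω' - W ((i : ℝ) / (n : ℝ)) ω'})
              (fun _ => (1 : ℝ≥0∞)) ω).toReal))) ∂P)
        ≤ ENNReal.ofReal (4 / (2 - Real.exp p) + 1)) ∧
    (∀ k : ℕ, 1 ≤ k →
      P {ω | (k : ℝ≥0∞) ≤ ∑' n : ℕ, Set.indicator (⋂ i ∈ Finset.range n,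
              {ω' | 0 ≤ W (((i : ℝ) + 1) / (n : ℝ)) ω' - W ((i : ℝ) / (n : ℝ)) ω'})
              (fun _ => (1 : ℝ≥0∞)) ω}
        ≤ ENNReal.ofReal (2 * Real.exp (9 / 8) * (3 * (k : ℝ) + 1)) * ((1 : ℝ≥0∞) / 2) ^ k) := by
  have hE (n : ℕ) : P (nondecreasingOnGrid W n) ≤ (1 / 2) ^ n :=
    (hW.measure_nondecreasingOnGrid n).le
  refine ⟨hW.measure_nondecreasingOnGrid, fun p hp0 hp =>
    lintegral_exp_mul_occurrenceCount_le hW.measurableSet_nondecreasingOnGrid hE hp0 hp,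
    fun k hk => ?_⟩
  obtain ⟨j, rfl⟩ := Nat.exists_eq_add_of_le' hk
  have h_four : (4 : ℝ) ≤ 2 * Real.exp (9 / 8) * (3 * ((j + 1 : ℕ) : ℝ) + 1) := by
    have := Real.one_le_exp (x := 9 / 8) (by norm_num)
    push_cast
    nlinarith [(j.cast_nonneg : (0 : ℝ) ≤ j)]
  have h_half : (4 : ℝ≥0∞) * (1 / 2) = 2 := by
    rw [← mul_div_assoc, mul_one, eq_comm, ENNReal.eq_div_iff two_ne_zero ENNReal.ofNat_ne_top]
    norm_num
  calc _ ≤ 2 * (1 / 2) ^ j := (measure_le_occurrenceCount_le hE j).trans_eq (by norm_num [mul_comm])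
    _ = ENNReal.ofReal 4 * (1 / 2) ^ (j + 1) := by
        rw [pow_succ, ENNReal.ofReal_ofNat, ← mul_assoc, mul_right_comm, h_half]
    _ ≤ _ := by gcongr
end

section
/- Let X = (X_t)_{t∈[0,1]} be a stochastic process with values in a separable normed space satisfying E[‖X_t - X_s‖^α] ≤ C·|t-s|^{1+β} for all s,t ∈ [0,1], where α, β, C > 0. Then for any γ ∈ (0, β/α) and every n ∈ ℕ, P(max_{1≤k≤2^n} ‖X_{k/2^n} - X_{(k-1)/2^n}‖ ≥ 2^{-γn}) ≤ C·2^{-n(β - αγ)}. -/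
open MeasureTheory ProbabilityTheory Set
open scoped ENNReal NNReal

/-- Kolmogorov–Chentsov dyadic increment estimate: if
`E[‖X_t - X_s‖^α] ≤ C·|t-s|^{1+β}` on `[0,1]` then for `γ ∈ (0, β/α)` and every `n`,
`P(max_{1≤k≤2ⁿ} ‖X_{k/2ⁿ} - X_{(k-1)/2ⁿ}‖ ≥ 2^{-γn}) ≤ C·2^{-n(β-αγ)}`. -/
theorem stmt15 {Ω : Type*} [MeasurableSpace Ω] (P : Measure Ω) [IsProbabilityMeasure P]
    {B : Type*} [NormedAddCommGroup B] [MeasurableSpace B] [BorelSpace B]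
    [TopologicalSpace.SeparableSpace B]
    (X : ℝ → Ω → B) (hX : ∀ t, Measurable (X t))
    (α β C : ℝ) (hα : 0 < α) (hβ : 0 < β) (hC : 0 < C)
    (hmom : ∀ s ∈ Set.Icc (0 : ℝ) 1, ∀ t ∈ Set.Icc (0 : ℝ) 1,
      (∫⁻ ω, ENNReal.ofReal (‖X t ω - X s ω‖ ^ α) ∂P)
        ≤ ENNReal.ofReal (C * |t - s| ^ (1 + β)))
    (γ : ℝ) (hγ : γ ∈ Set.Ioo 0 (β / α)) (n : ℕ) :
    P {ω | ∃ k : ℕ, 1 ≤ k ∧ k ≤ 2 ^ n ∧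
        (2 : ℝ) ^ (-(γ * n)) ≤ ‖X ((k : ℝ) / 2 ^ n) ω - X (((k : ℝ) - 1) / 2 ^ n) ω‖}
      ≤ ENNReal.ofReal (C * (2 : ℝ) ^ (-((n : ℝ) * (β - α * γ)))) := by
  have : SecondCountableTopology B :=
    UniformSpace.secondCountable_of_separable B
  obtain ⟨hγ0, hγβ⟩ := hγ
  set ε : ℝ := (2:ℝ) ^ (-(γ * n)) with hεdef
  have hε0 : 0 < ε := Real.rpow_pos_of_pos two_pos _
  have h2n : (0:ℝ) < 2 ^ n := by positivity
  have key : ∀ k : ℕ, k ∈ Finset.Icc (1:ℕ) (2 ^ n) →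
      P {ω | ε ≤ ‖X ((k : ℝ) / 2 ^ n) ω - X (((k : ℝ) - 1) / 2 ^ n) ω‖}
        ≤ ENNReal.ofReal (C * (((2:ℝ) ^ n)⁻¹) ^ (1 + β)) / ENNReal.ofReal (ε ^ α) := by
    intro k hk
    rw [Finset.mem_Icc] at hk
    obtain ⟨hk1, hk2⟩ := hk
    set t := (k : ℝ) / 2 ^ n with htdef
    set s := ((k : ℝ) - 1) / 2 ^ n with hsdef
    have hk1' : (1:ℝ) ≤ (k:ℝ) := by exact_mod_cast hk1
    have hk2' : (k:ℝ) ≤ 2 ^ n := by exact_mod_cast hk2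
    have ht : t ∈ Icc (0:ℝ) 1 := by
      constructor
      · positivity
      · rw [htdef, div_le_one h2n]; exact hk2'
    have hs : s ∈ Icc (0:ℝ) 1 := by
      constructor
      · apply div_nonneg (by linarith) h2n.le
      · rw [hsdef, div_le_one h2n]; linarith
    have hts : |t - s| = ((2:ℝ) ^ n)⁻¹ := by
      rw [htdef, hsdef, div_sub_div_same]
      simp [abs_of_nonneg, h2n.le, one_div]
    have hmeas : Measurable fun ω => ENNReal.ofReal (‖X t ω - X s ω‖ ^ α) :=
      ((((hX t).sub (hX s)).norm).pow measurable_const).ennreal_ofReal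
    have hsub : {ω | ε ≤ ‖X t ω - X s ω‖} ⊆
        {ω | ENNReal.ofReal (ε ^ α) ≤ ENNReal.ofReal (‖X t ω - X s ω‖ ^ α)} := by
      intro ω hω
      exact ENNReal.ofReal_le_ofReal (Real.rpow_le_rpow hε0.le hω hα.le)
    calc P {ω | ε ≤ ‖X t ω - X s ω‖}
        ≤ P {ω | ENNReal.ofReal (ε ^ α) ≤ ENNReal.ofReal (‖X t ω - X s ω‖ ^ α)} :=
          measure_mono hsub
      _ ≤ (∫⁻ ω, ENNReal.ofReal (‖X t ω - X s ω‖ ^ α) ∂P) / ENNReal.ofReal (ε ^ α) :=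
          meas_ge_le_lintegral_div hmeas.aemeasurable
            (by simp [ENNReal.ofReal_pos, Real.rpow_pos_of_pos hε0]) ENNReal.ofReal_ne_top
      _ ≤ ENNReal.ofReal (C * (((2:ℝ) ^ n)⁻¹) ^ (1 + β)) / ENNReal.ofReal (ε ^ α) := by
          gcongr
          have := hmom s hs t ht
          rwa [hts] at this
  have hUnion : {ω | ∃ k : ℕ, 1 ≤ k ∧ k ≤ 2 ^ n ∧
        ε ≤ ‖X ((k : ℝ) / 2 ^ n) ω - X (((k : ℝ) - 1) / 2 ^ n) ω‖} ⊆
      ⋃ k ∈ Finset.Icc (1:ℕ) (2 ^ n),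
        {ω | ε ≤ ‖X ((k : ℝ) / 2 ^ n) ω - X (((k : ℝ) - 1) / 2 ^ n) ω‖} := by
    intro ω hω
    obtain ⟨k, hk1, hk2, hk⟩ := hω
    exact Set.mem_biUnion (Finset.mem_Icc.mpr ⟨hk1, hk2⟩) hk
  calc P {ω | ∃ k : ℕ, 1 ≤ k ∧ k ≤ 2 ^ n ∧
        ε ≤ ‖X ((k : ℝ) / 2 ^ n) ω - X (((k : ℝ) - 1) / 2 ^ n) ω‖}
      ≤ P (⋃ k ∈ Finset.Icc (1:ℕ) (2 ^ n),
        {ω | ε ≤ ‖X ((k : ℝ) / 2 ^ n) ω - X (((k : ℝ) - 1) / 2 ^ n) ω‖}) :=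
        measure_mono hUnion
    _ ≤ ∑ k ∈ Finset.Icc (1:ℕ) (2 ^ n),
        P {ω | ε ≤ ‖X ((k : ℝ) / 2 ^ n) ω - X (((k : ℝ) - 1) / 2 ^ n) ω‖} :=
        measure_biUnion_finset_le _ _
    _ ≤ ∑ k ∈ Finset.Icc (1:ℕ) (2 ^ n),
        (ENNReal.ofReal (C * (((2:ℝ) ^ n)⁻¹) ^ (1 + β)) / ENNReal.ofReal (ε ^ α)) :=
        Finset.sum_le_sum key
    _ = (2 ^ n : ℕ) *
        (ENNReal.ofReal (C * (((2:ℝ) ^ n)⁻¹) ^ (1 + β)) / ENNReal.ofReal (ε ^ α)) := by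
        rw [Finset.sum_const, Nat.card_Icc]
        simp [nsmul_eq_mul]
    _ = ENNReal.ofReal ((2 ^ n : ℝ) *
        (C * (((2:ℝ) ^ n)⁻¹) ^ (1 + β) / ε ^ α)) := by
        rw [← ENNReal.ofReal_div_of_pos (Real.rpow_pos_of_pos hε0 _),
          ← ENNReal.ofReal_natCast (2 ^ n), ← ENNReal.ofReal_mul (by positivity)]
        congr 1
        push_cast
        ring
    _ ≤ ENNReal.ofReal (C * (2 : ℝ) ^ (-((n : ℝ) * (β - α * γ)))) := by
        apply ENNReal.ofReal_le_ofReal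
        apply le_of_eq
        have h2 : (0:ℝ) ≤ 2 := by norm_num
        rw [hεdef, ← Real.rpow_natCast (2:ℝ) n,
          ← Real.rpow_neg h2, ← Real.rpow_mul h2, ← Real.rpow_mul h2]
        rw [show (2:ℝ)^((n:ℝ)) * (C * (2:ℝ)^(-(n:ℝ)*(1+β)) / (2:ℝ)^(-(γ*(n:ℝ))*α))
            = C * ((2:ℝ)^((n:ℝ)) * (2:ℝ)^(-(n:ℝ)*(1+β)) / (2:ℝ)^(-(γ*(n:ℝ))*α)) by ring,
          ← Real.rpow_add two_pos, ← Real.rpow_sub two_pos]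
        congr 1
        ring
end

section
/- Under the hypotheses of the Kolmogorov–Chentsov theorem (E[‖X_t - X_s‖^α] ≤ C·|t-s|^{1+β} for s,t ∈ [0,1], γ ∈ (0, β/α)), the deviation count O := ∑_{n=0}^∞ 1{max_{1≤k≤2^n} ‖X_{k/2^n} - X_{(k-1)/2^n}‖ ≥ 2^{-γn}} satisfies, for all k ≥ 1, P(O ≥ k) ≤ 2·e^{9/8}·[k·(C·(2^{β-αγ} - 1)/(1 - 2^{-(β-αγ)}) + 1) + 1]·2^{-k(β-αγ)}. -/
set_option maxHeartbeats 1000000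


open MeasureTheory ProbabilityTheory Set
open scoped ENNReal NNReal

/-- Kolmogorov–Chentsov deviation frequency quantification: under the moment condition
`E[‖X_t - X_s‖^α] ≤ C·|t-s|^{1+β}` on `[0,1]` and `γ ∈ (0, β/α)`, the count
`O = ∑ₙ 1{max_{1≤k≤2ⁿ} ‖X_{k/2ⁿ} - X_{(k-1)/2ⁿ}‖ ≥ 2^{-γn}}` satisfies, for all `k ≥ 1`,
`P(O ≥ k) ≤ 2e^{9/8}·[k·(C(2^{β-αγ}-1)/(1-2^{-(β-αγ)}) + 1) + 1]·2^{-k(β-αγ)}`. -/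
theorem stmt16 {Ω : Type*} [MeasurableSpace Ω] (P : Measure Ω) [IsProbabilityMeasure P]
    {B : Type*} [NormedAddCommGroup B] [MeasurableSpace B] [BorelSpace B]
    [TopologicalSpace.SeparableSpace B]
    (X : ℝ → Ω → B) (hX : ∀ t, Measurable (X t))
    (α β C : ℝ) (hα : 0 < α) (hβ : 0 < β) (hC : 0 < C)
    (hmom : ∀ s ∈ Set.Icc (0 : ℝ) 1, ∀ t ∈ Set.Icc (0 : ℝ) 1,
      (∫⁻ ω, ENNReal.ofReal (‖X t ω - X s ω‖ ^ α) ∂P)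
        ≤ ENNReal.ofReal (C * |t - s| ^ (1 + β)))
    (γ : ℝ) (hγ : γ ∈ Set.Ioo 0 (β / α)) (k : ℕ) (hk : 1 ≤ k) :
    P {ω | (k : ℝ≥0∞) ≤ ∑' n : ℕ, Set.indicator
        {ω' | ∃ j : ℕ, 1 ≤ j ∧ j ≤ 2 ^ n ∧
          (2 : ℝ) ^ (-(γ * n)) ≤ ‖X ((j : ℝ) / 2 ^ n) ω' - X (((j : ℝ) - 1) / 2 ^ n) ω'‖}
        (fun _ => (1 : ℝ≥0∞)) ω}
      ≤ ENNReal.ofReal (2 * Real.exp (9 / 8) *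
          ((k : ℝ) * (C * ((2 : ℝ) ^ (β - α * γ) - 1) / (1 - (2 : ℝ) ^ (-(β - α * γ))) + 1) + 1) *
          (2 : ℝ) ^ (-((k : ℝ) * (β - α * γ)))) := by
  obtain ⟨hγ0, hγβ⟩ := hγ
  haveI : SecondCountableTopology B := UniformSpace.secondCountable_of_separable B
  set b : ℝ := β - α * γ with hb_def
  have hb : 0 < b := by
    have h1 : γ * α < β := (lt_div_iff₀ hα).mp hγβ
    simp only [hb_def]; nlinarith
  set r : ℝ := (2 : ℝ) ^ (-b) with hr_def
  have hr0 : 0 < r := Real.rpow_pos_of_pos two_pos _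
  have hr1 : r < 1 := by
    rw [hr_def]
    exact Real.rpow_lt_one_of_one_lt_of_neg one_lt_two (by linarith)
  set A : ℕ → Set Ω := fun n => {ω' | ∃ j : ℕ, 1 ≤ j ∧ j ≤ 2 ^ n ∧
      (2 : ℝ) ^ (-(γ * n)) ≤ ‖X ((j : ℝ) / 2 ^ n) ω' - X (((j : ℝ) - 1) / 2 ^ n) ω'‖} with hA_def
  -- Markov inequality for a single increment
  have markov : ∀ s ∈ Set.Icc (0 : ℝ) 1, ∀ t ∈ Set.Icc (0 : ℝ) 1, ∀ ε : ℝ, 0 < ε →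
      P {ω | ε ≤ ‖X t ω - X s ω‖} ≤ ENNReal.ofReal (C * |t - s| ^ (1 + β) / ε ^ α) := by
    intro s hs t ht ε hε
    have hεα : 0 < ε ^ α := Real.rpow_pos_of_pos hε _
    have hmeas : Measurable fun ω => ENNReal.ofReal (‖X t ω - X s ω‖ ^ α) := by
      apply ENNReal.measurable_ofReal.comp
      exact (Real.continuous_rpow_const hα.le).measurable.comp (((hX t).sub (hX s)).norm)
    have h2 := mul_meas_ge_le_lintegral₀ (μ := P) hmeas.aemeasurable (ENNReal.ofReal (ε ^ α))
    have h1 : P {ω | ε ≤ ‖X t ω - X s ω‖}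
        ≤ P {ω | ENNReal.ofReal (ε ^ α) ≤ ENNReal.ofReal (‖X t ω - X s ω‖ ^ α)} := by
      apply measure_mono
      intro ω hω
      exact ENNReal.ofReal_le_ofReal (Real.rpow_le_rpow hε.le hω hα.le)
    have h3 : ENNReal.ofReal (ε ^ α) * P {ω | ε ≤ ‖X t ω - X s ω‖}
        ≤ ENNReal.ofReal (C * |t - s| ^ (1 + β)) := by
      calc ENNReal.ofReal (ε ^ α) * P {ω | ε ≤ ‖X t ω - X s ω‖}
          ≤ ENNReal.ofReal (ε ^ α) *
            P {ω | ENNReal.ofReal (ε ^ α) ≤ ENNReal.ofReal (‖X t ω - X s ω‖ ^ α)} :=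
            mul_le_mul_right h1 _
        _ ≤ ∫⁻ ω, ENNReal.ofReal (‖X t ω - X s ω‖ ^ α) ∂P := h2
        _ ≤ ENNReal.ofReal (C * |t - s| ^ (1 + β)) := hmom s hs t ht
    rw [ENNReal.ofReal_div_of_pos hεα,
      ENNReal.le_div_iff_mul_le (Or.inl (ENNReal.ofReal_pos.mpr hεα).ne')
        (Or.inl ENNReal.ofReal_ne_top), mul_comm]
    exact h3
  -- bound on the measure of A n
  have hA_bound : ∀ n : ℕ, P (A n) ≤ ENNReal.ofReal (C * r ^ n) := by
    intro n
    have h2n : (0 : ℝ) < 2 ^ n := by positivity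
    have hsub : A n ⊆ ⋃ j ∈ Finset.Icc (1:ℕ) (2 ^ n),
        {ω | (2 : ℝ) ^ (-(γ * n)) ≤ ‖X ((j : ℝ) / 2 ^ n) ω - X (((j : ℝ) - 1) / 2 ^ n) ω‖} := by
      rintro ω ⟨j, hj1, hj2, hjb⟩
      exact Set.mem_biUnion (Finset.mem_Icc.mpr ⟨hj1, hj2⟩) hjb
    refine (measure_mono hsub).trans ((measure_biUnion_finset_le _ _).trans ?_)
    have hper : ∀ j ∈ Finset.Icc (1:ℕ) (2 ^ n),
        P {ω | (2 : ℝ) ^ (-(γ * n)) ≤ ‖X ((j : ℝ) / 2 ^ n) ω - X (((j : ℝ) - 1) / 2 ^ n) ω‖}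
          ≤ ENNReal.ofReal (C * r ^ n * ((2 : ℝ) ^ n)⁻¹) := by
      intro j hj
      obtain ⟨hj1, hj2⟩ := Finset.mem_Icc.mp hj
      have hj1' : (1 : ℝ) ≤ (j : ℝ) := by exact_mod_cast hj1
      have hj2' : (j : ℝ) ≤ 2 ^ n := by exact_mod_cast Nat.cast_le.mpr hj2
      have hs : ((j : ℝ) - 1) / 2 ^ n ∈ Set.Icc (0 : ℝ) 1 := by
        constructor
        · apply div_nonneg (by linarith) h2n.le
        · rw [div_le_one h2n]; linarith
      have ht : (j : ℝ) / 2 ^ n ∈ Set.Icc (0 : ℝ) 1 := by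
        constructor
        · apply div_nonneg (by linarith) h2n.le
        · rw [div_le_one h2n]; linarith
      have hε : (0 : ℝ) < (2 : ℝ) ^ (-(γ * n)) := Real.rpow_pos_of_pos two_pos _
      refine (markov _ hs _ ht _ hε).trans (le_of_eq (congrArg ENNReal.ofReal ?_))
      have habs : |(j : ℝ) / 2 ^ n - ((j : ℝ) - 1) / 2 ^ n| = ((2 : ℝ) ^ n)⁻¹ := by
        rw [div_sub_div_same, abs_of_pos (by rw [sub_sub_cancel]; positivity)]
        rw [sub_sub_cancel, one_div]
      rw [habs]
      have e1 : ((2 : ℝ) ^ n)⁻¹ = (2 : ℝ) ^ (-(n : ℝ)) := by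
        rw [← Real.rpow_natCast 2 n, ← Real.rpow_neg two_pos.le]
      have e2 : r ^ n = (2 : ℝ) ^ ((-b) * (n : ℝ)) := by
        rw [hr_def, Real.rpow_mul two_pos.le, Real.rpow_natCast]
      rw [e1, e2, ← Real.rpow_mul two_pos.le, ← Real.rpow_mul two_pos.le, div_eq_mul_inv,
        ← Real.rpow_neg two_pos.le, mul_assoc, mul_assoc, ← Real.rpow_add two_pos,
        ← Real.rpow_add two_pos]
      congr 1
      simp only [hb_def]
      ring
    refine (Finset.sum_le_sum hper).trans ?_
    rw [Finset.sum_const, Nat.card_Icc, nsmul_eq_mul]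
    have hcard : (2 ^ n + 1 - 1 : ℕ) = 2 ^ n := by simp
    rw [hcard, ← ENNReal.ofReal_natCast, ← ENNReal.ofReal_mul (by positivity)]
    apply ENNReal.ofReal_le_ofReal
    have : ((2 ^ n : ℕ) : ℝ) = (2 : ℝ) ^ n := by push_cast; ring
    rw [this]
    rw [mul_comm, mul_assoc]
    rw [inv_mul_cancel₀ h2n.ne']
    rw [mul_one]
  -- inclusion of the event into a tail union
  have hsub2 : {ω | (k : ℝ≥0∞) ≤ ∑' n : ℕ, Set.indicator (A n) (fun _ => (1 : ℝ≥0∞)) ω}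
      ⊆ ⋃ m : ℕ, A (m + (k - 1)) := by
    intro ω hω
    by_contra hcon
    simp only [Set.mem_iUnion, not_exists] at hcon
    have hzero : ∀ n ∉ Finset.range (k - 1),
        Set.indicator (A n) (fun _ => (1 : ℝ≥0∞)) ω = 0 := by
      intro n hn
      have hn' : k - 1 ≤ n := by simpa using hn
      obtain ⟨m, rfl⟩ : ∃ m, n = m + (k - 1) := ⟨n - (k - 1), by omega⟩
      exact Set.indicator_of_notMem (hcon m) _
    have hω' : (k : ℝ≥0∞) ≤ ∑ n ∈ Finset.range (k - 1),
        Set.indicator (A n) (fun _ => (1 : ℝ≥0∞)) ω := by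
      exact le_of_le_of_eq hω (tsum_eq_sum hzero)
    have hle : ∑ n ∈ Finset.range (k - 1), Set.indicator (A n) (fun _ => (1 : ℝ≥0∞)) ω
        ≤ ((k - 1 : ℕ) : ℝ≥0∞) := by
      calc ∑ n ∈ Finset.range (k - 1), Set.indicator (A n) (fun _ => (1 : ℝ≥0∞)) ω
          ≤ ∑ _n ∈ Finset.range (k - 1), (1 : ℝ≥0∞) :=
            Finset.sum_le_sum (fun n _ => Set.indicator_apply_le (fun _ => le_refl _))
        _ = ((k - 1 : ℕ) : ℝ≥0∞) := by simp
    have hcontr := hω'.trans hle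
    rw [Nat.cast_le] at hcontr
    omega
  -- tail estimate
  have tail : P {ω | (k : ℝ≥0∞) ≤ ∑' n : ℕ, Set.indicator (A n) (fun _ => (1 : ℝ≥0∞)) ω}
      ≤ ENNReal.ofReal (C * r ^ (k - 1) * (1 - r)⁻¹) := by
    refine (measure_mono hsub2).trans ((measure_iUnion_le _).trans ?_)
    refine (ENNReal.tsum_le_tsum (fun m => hA_bound (m + (k - 1)))).trans ?_
    have heq : ∀ m : ℕ, C * r ^ (m + (k - 1)) = (C * r ^ (k - 1)) * r ^ m := fun m => by
      rw [pow_add]; ring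
    have hsummable : Summable (fun m : ℕ => C * r ^ (m + (k - 1))) := by
      simp_rw [heq]
      exact (summable_geometric_of_lt_one hr0.le hr1).mul_left _
    rw [← ENNReal.ofReal_tsum_of_nonneg (fun m => by positivity) hsummable]
    apply le_of_eq
    congr 1
    rw [tsum_congr heq, tsum_mul_left, tsum_geometric_of_lt_one hr0.le hr1]
  -- final numeric comparison
  set E : ℝ := Real.exp (9 / 8) with hE_def
  have hE : (1 : ℝ) ≤ E := Real.one_le_exp (by norm_num)
  have hk1 : (1 : ℝ) ≤ (k : ℝ) := by exact_mod_cast hk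
  have h2br : (2 : ℝ) ^ b = r⁻¹ := by
    rw [hr_def, ← Real.rpow_neg two_pos.le, neg_neg]
  have hfrac : C * ((2 : ℝ) ^ b - 1) / (1 - r) = C * r⁻¹ := by
    rw [h2br]
    have h1r : (1 : ℝ) - r ≠ 0 := by linarith
    field_simp
  have hexp : (2 : ℝ) ^ (-((k : ℝ) * b)) = r ^ k := by
    rw [hr_def, ← Real.rpow_natCast ((2 : ℝ) ^ (-b)) k, ← Real.rpow_mul two_pos.le]
    congr 1
    ring
  rw [hfrac, hexp]
  have hq : (0 : ℝ) < r ^ (k - 1) := pow_pos hr0 _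
  have hrk : (0 : ℝ) < r ^ k := pow_pos hr0 _
  by_cases hcase : r ≤ 1 - 1 / (2 * E * (k : ℝ))
  · -- tail bound suffices
    refine tail.trans (ENNReal.ofReal_le_ofReal ?_)
    have hinv : (1 - r)⁻¹ ≤ 2 * E * (k : ℝ) := by
      have h1 : 1 / (2 * E * (k : ℝ)) ≤ 1 - r := by linarith
      have h2 : (0 : ℝ) < 1 / (2 * E * (k : ℝ)) := by positivity
      calc (1 - r)⁻¹ ≤ (1 / (2 * E * (k : ℝ)))⁻¹ := by
            exact inv_anti₀ h2 h1
        _ = 2 * E * (k : ℝ) := by rw [one_div, inv_inv]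
    have hkk : r ^ k = r * r ^ (k - 1) := by
      conv_lhs => rw [show k = 1 + (k - 1) by omega]
      rw [pow_add, pow_one]
    calc C * r ^ (k - 1) * (1 - r)⁻¹
        ≤ C * r ^ (k - 1) * (2 * E * (k : ℝ)) :=
          mul_le_mul_of_nonneg_left hinv (by positivity)
      _ = 2 * E * ((k : ℝ) * (C * r⁻¹)) * r ^ k := by
          rw [hkk]; field_simp
      _ ≤ 2 * E * ((k : ℝ) * (C * r⁻¹ + 1) + 1) * r ^ k := by
          have h1 : (k : ℝ) * (C * r⁻¹) ≤ (k : ℝ) * (C * r⁻¹ + 1) + 1 := by nlinarith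
          have h2 : (0 : ℝ) ≤ 2 * E := by linarith
          nlinarith [mul_le_mul_of_nonneg_left h1 h2]
  · -- the trivial bound P ≤ 1 suffices
    push_neg at hcase
    refine (prob_le_one).trans ?_
    rw [show (1 : ℝ≥0∞) = ENNReal.ofReal 1 by simp]
    apply ENNReal.ofReal_le_ofReal
    set x : ℝ := 1 / (2 * E * (k : ℝ)) with hx_def
    have hx0 : (0 : ℝ) < x := by positivity
    have hxhalf : x ≤ 1 / 2 := by
      rw [hx_def]
      rw [div_le_div_iff₀ (by positivity) (by norm_num)]
      nlinarith
    have hbern : 1 - (k : ℝ) * x ≤ (1 - x) ^ k := by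
      have := one_add_mul_le_pow (a := -x) (by linarith) k
      simpa [sub_eq_add_neg, mul_comm] using this
    have hkx : (k : ℝ) * x = 1 / (2 * E) := by
      rw [hx_def]
      field_simp
    have hrpow : (1 - x) ^ k ≤ r ^ k := by
      gcongr <;> linarith
    have hrklb : 1 - 1 / (2 * E) ≤ r ^ k := by
      calc 1 - 1 / (2 * E) = 1 - (k : ℝ) * x := by rw [hkx]
        _ ≤ (1 - x) ^ k := hbern
        _ ≤ r ^ k := hrpow
    have hEinv : 1 / (2 * E) ≤ 1 / 2 := by
      rw [div_le_div_iff₀ (by positivity) (by norm_num)]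
      nlinarith
    have hrkhalf : (1 : ℝ) / 2 ≤ r ^ k := by linarith
    have hM : (2 : ℝ) ≤ (k : ℝ) * (C * r⁻¹ + 1) + 1 := by
      have hcr : (0 : ℝ) < C * r⁻¹ := by positivity
      nlinarith
    nlinarith [mul_le_mul hM hrkhalf (by norm_num) (by nlinarith : (0:ℝ) ≤ (k : ℝ) * (C * r⁻¹ + 1) + 1)]
end

section
/- Let W be a standard Brownian motion on [0,1], θ ∈ (0,1), and for δ > 0 let μ(δ) = √(2δ·ln(1/δ)). Then for every n ≥ 1/(1-θ) and ε > (1+θ)/(1-θ) - 1, with ρ := (1-θ)(1+ε)² - (1+θ) > 0, there is an explicit constant K_ε = 8^{1+(1+ε)²}/(√π·(1+ε)·(1+(1+ε)²)) such that P(max over 0 ≤ i < j ≤ ⌈e^n⌉ with 1 ≤ j-i ≤ ⌈e^{nθ}⌉ of |W_{j/e^n} - W_{i/e^n}|/μ((j-i)·e^{-n}) ≥ 1+ε) ≤ K_ε·e^{-ρn}. -/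
/-!
Union bound over the at most `(⌈eⁿ⌉ + 1)·⌈e^{nθ}⌉` pairs `(i, j)`. An increment `W_t - W_s` with
`t - s = δ` is centred Gaussian of variance `δ`, so the Chernoff bound gives
`P(|W_t - W_s| ≥ c·μ(δ)) ≤ 2·exp(-c² log(1/δ)) = 2δ^{c²}`, and `δ ≤ 2e^{-n(1-θ)}` on the grid.
Summing yields `2^{c²+3}·e^{-ρn}` with `c = 1 + ε`. Chernoff is weaker than the Mills-ratio bound
`e^{-x²/2}/(√(2π)x)` by a factor of order `√π·c`, which the constant `K_ε` still absorbs because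
`√π·c·(1 + c²) ≤ 4^{c²}` for `c ≥ 1`.
-/

open MeasureTheory ProbabilityTheory Set Real
open scoped ENNReal NNReal

lemma mul_one_add_le_four_rpow {a : ℝ} (ha : 1 ≤ a) : 9 / 5 * a * (1 + a) ≤ 4 ^ a := by
  have hlog : 1.38 < log 4 := by
    rw [show (4 : ℝ) = 2 ^ 2 by norm_num, log_pow]
    have := log_two_gt_d9
    push_cast
    linarith
  have hexp := quadratic_le_exp_of_nonneg (mul_nonneg (by linarith : 0 ≤ a - 1) (by linarith))
  have h4 : (4 : ℝ) ^ a = 4 * exp ((a - 1) * log 4) := by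
    rw [rpow_def_of_pos (by norm_num), show log 4 * a = log 4 + (a - 1) * log 4 by ring, exp_add,
      exp_log (by norm_num)]
  rw [h4]
  nlinarith [mul_le_mul_of_nonneg_left hlog.le (by linarith : (0 : ℝ) ≤ a - 1)]

lemma sqrt_pi_lt_nine_div_five : √π < 9 / 5 := by
  rw [sqrt_lt' (by norm_num)]
  linarith [pi_lt_d2]

lemma two_rpow_add_three_le {c : ℝ} (hc : 1 ≤ c) :
    (2 : ℝ) ^ (c ^ 2 + 3) ≤ 8 ^ (1 + c ^ 2) / (√π * c * (1 + c ^ 2)) := by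
  have ha : 1 ≤ c ^ 2 := one_le_pow₀ hc
  have h8 : (8 : ℝ) ^ (1 + c ^ 2) = 2 ^ (c ^ 2 + 3) * 4 ^ (c ^ 2) := by
    rw [show (8 : ℝ) = 2 ^ (3 : ℝ) by norm_num, show (4 : ℝ) = 2 ^ (2 : ℝ) by norm_num,
      ← rpow_mul, ← rpow_mul, ← rpow_add] <;> norm_num
    ring_nf
  rw [le_div_iff₀ (by positivity), h8]
  gcongr
  calc √π * c * (1 + c ^ 2) ≤ 9 / 5 * c ^ 2 * (1 + c ^ 2) := by
        gcongr
        · exact sqrt_pi_lt_nine_div_five.le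
        · nlinarith
    _ ≤ 4 ^ c ^ 2 := mul_one_add_le_four_rpow ha

lemma two_mul_exp_neg_lt_one {m : ℝ} (hm : 1 ≤ m) : 2 * exp (-m) < 1 := by
  have := exp_one_gt_d9
  rw [exp_neg, ← div_eq_mul_inv, div_lt_one (exp_pos m)]
  linarith [exp_le_exp.2 hm]

lemma natCeil_exp_le_two_mul_exp {x : ℝ} (hx : 0 ≤ x) : (⌈exp x⌉₊ : ℝ) ≤ 2 * exp x :=
  Nat.ceil_le_two_mul (by linarith [one_le_exp hx])

lemma hasSubgaussianMGF_id_gaussianReal (v : ℝ≥0) :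
    HasSubgaussianMGF id v (gaussianReal 0 v) where
  integrable_exp_mul t := integrable_exp_mul_gaussianReal t
  mgf_le t := by simp [mgf_id_gaussianReal]

lemma gaussianReal_measureReal_le_abs_le (v : ℝ≥0) {x : ℝ} (hx : 0 ≤ x) :
    (gaussianReal 0 v).real {y | x ≤ |y|} ≤ 2 * exp (-x ^ 2 / (2 * v)) := by
  have h := hasSubgaussianMGF_id_gaussianReal v
  have hsplit : {y : ℝ | x ≤ |y|} = {y | x ≤ id y} ∪ {y | x ≤ (-id) y} := by
    ext y
    simp only [mem_ofPred_eq, mem_union, id, Pi.neg_apply, le_abs]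
  rw [hsplit, two_mul]
  exact (measureReal_union_le _ _).trans
    (add_le_add (h.measure_ge_le hx) (h.neg.measure_ge_le hx))

noncomputable def levyModulus (δ : ℝ) : ℝ := √(2 * δ * log (1 / δ))

lemma levyModulus_nonneg (δ : ℝ) : 0 ≤ levyModulus δ := sqrt_nonneg _

lemma exp_neg_mul_levyModulus_sq_div {δ : ℝ} (hδ0 : 0 < δ) (hδ1 : δ ≤ 1) (c : ℝ) :
    exp (-(c * levyModulus δ) ^ 2 / (2 * δ)) = δ ^ (c ^ 2) := by
  have hlog : log (1 / δ) = -log δ := by rw [one_div, log_inv]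
  have hL : 0 ≤ 2 * δ * log (1 / δ) := by
    have := log_nonneg (one_le_one_div hδ0 hδ1)
    positivity
  rw [levyModulus, mul_pow, sq_sqrt hL, rpow_def_of_pos hδ0, hlog]
  congr 1
  field_simp

section BrownianMotion

variable {Ω : Type*} [MeasurableSpace Ω] {P : Measure Ω} {W : ℝ → Ω → ℝ}

lemma IsBrownianMotion.measure_le_abs_sub_le (hW : IsBrownianMotion P W) {s t : ℝ}
    (hst : s ≤ t) {x : ℝ} (hx : 0 ≤ x) :
    P {ω | x ≤ |W t ω - W s ω|} ≤ ENNReal.ofReal (2 * exp (-x ^ 2 / (2 * (t - s)))) := by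
  have hmeas : MeasurableSet {y : ℝ | x ≤ |y|} := measurableSet_le measurable_const measurable_abs
  have htail := gaussianReal_measureReal_le_abs_le (t - s).toNNReal hx
  rw [Real.coe_toNNReal _ (sub_nonneg.2 hst)] at htail
  calc P {ω | x ≤ |W t ω - W s ω|}
      = gaussianReal 0 (t - s).toNNReal {y | x ≤ |y|} := by
        rw [← hW.incr_law s t hst, Measure.map_apply (f := fun ω => W t ω - W s ω)
          ((hW.meas t).sub (hW.meas s)) hmeas]
        rfl
    _ ≤ _ := by
        rw [← ofReal_measureReal]
        exact ENNReal.ofReal_le_ofReal htail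

lemma IsBrownianMotion.measure_le_abs_sub_div_levyModulus_le (hW : IsBrownianMotion P W)
    {s t δ : ℝ} (hst : t - s = δ) (hδ0 : 0 < δ) (hδ1 : δ ≤ 1) {c : ℝ} (hc : 0 < c) :
    P {ω | c ≤ |W t ω - W s ω| / levyModulus δ} ≤ ENNReal.ofReal (2 * δ ^ (c ^ 2)) := by
  have hsub : {ω | c ≤ |W t ω - W s ω| / levyModulus δ}
      ⊆ {ω | c * levyModulus δ ≤ |W t ω - W s ω|} := by
    intro ω hω
    rcases (levyModulus_nonneg δ).eq_or_lt with h0 | hpos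
    · -- `x / 0 = 0`, so the event is empty
      rw [mem_ofPred_eq, ← h0, div_zero] at hω
      exact absurd hω hc.not_ge
    · exact (le_div_iff₀ hpos).1 hω
  calc P _ ≤ P {ω | c * levyModulus δ ≤ |W t ω - W s ω|} := measure_mono hsub
    _ ≤ ENNReal.ofReal (2 * exp (-(c * levyModulus δ) ^ 2 / (2 * (t - s)))) :=
        hW.measure_le_abs_sub_le (by linarith) (mul_nonneg hc.le (levyModulus_nonneg δ))
    _ = ENNReal.ofReal (2 * δ ^ (c ^ 2)) := by
        rw [hst, exp_neg_mul_levyModulus_sq_div hδ0 hδ1]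

lemma IsBrownianMotion.measure_grid_increment_le (hW : IsBrownianMotion P W) {n : ℕ} {θ c : ℝ}
    (hm : 1 ≤ n * (1 - θ)) (hc : 0 < c) (i : ℕ) {k : ℕ} (hk : 1 ≤ k)
    (hkM : (k : ℝ) ≤ 2 * exp (n * θ)) :
    P {ω | c ≤ |W ((i + k : ℕ) / exp n) ω - W (i / exp n) ω| /
        levyModulus ((((i + k : ℕ) : ℝ) - i) * exp (-n))}
      ≤ ENNReal.ofReal (2 ^ (c ^ 2 + 1) * exp (-(c ^ 2 * (n * (1 - θ))))) := by
  have hδ : (((i + k : ℕ) : ℝ) - i) * exp (-n) = k * exp (-n) := by push_cast; ring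
  have hδ0 : 0 < (k : ℝ) * exp (-n) := mul_pos (by exact_mod_cast hk) (exp_pos _)
  have hδm : (k : ℝ) * exp (-n) ≤ 2 * exp (-(n * (1 - θ))) := by
    calc (k : ℝ) * exp (-n) ≤ 2 * exp (n * θ) * exp (-n) := by gcongr
      _ = 2 * exp (-(n * (1 - θ))) := by rw [mul_assoc, ← exp_add]; ring_nf
  have hst : ((i + k : ℕ) : ℝ) / exp n - i / exp n = k * exp (-n) := by
    push_cast
    rw [exp_neg]
    ring
  rw [hδ]
  refine (hW.measure_le_abs_sub_div_levyModulus_le hst hδ0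
    (hδm.trans (two_mul_exp_neg_lt_one hm).le) hc).trans (ENNReal.ofReal_le_ofReal ?_)
  calc 2 * ((k : ℝ) * exp (-n)) ^ c ^ 2 ≤ 2 * (2 * exp (-(n * (1 - θ)))) ^ c ^ 2 := by gcongr
    _ = 2 ^ (c ^ 2 + 1) * exp (-(c ^ 2 * (n * (1 - θ)))) := by
      rw [mul_rpow zero_le_two (exp_pos _).le, ← exp_mul, rpow_add_one two_ne_zero]
      ring_nf

end BrownianMotion

lemma measure_exists_close_pair_le {Ω : Type*} [MeasurableSpace Ω] (P : Measure Ω) (N M : ℕ)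
    (Q : ℕ → ℕ → Ω → Prop) {C : ℝ≥0∞}
    (hQ : ∀ i ≤ N, ∀ k, 1 ≤ k → k ≤ M → P {ω | Q i (i + k) ω} ≤ C) :
    P {ω | ∃ i j : ℕ, i < j ∧ j ≤ N ∧ j - i ≤ M ∧ Q i j ω} ≤ (N + 1) * M * C := by
  let S := Finset.range (N + 1) ×ˢ Finset.Icc 1 M
  have hsub : {ω | ∃ i j : ℕ, i < j ∧ j ≤ N ∧ j - i ≤ M ∧ Q i j ω}
      ⊆ ⋃ p ∈ S, {ω | Q p.1 (p.1 + p.2) ω} := by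
    rintro ω ⟨i, j, hij, hjN, hjiM, hQij⟩
    refine mem_biUnion (x := (i, j - i)) ?_ ?_
    · simp only [S, Finset.coe_product, mem_prod, Finset.coe_range, mem_Iio, Finset.coe_Icc,
        mem_Icc]
      omega
    · rwa [mem_ofPred_eq, Nat.add_sub_cancel' hij.le]
  calc P _ ≤ ∑ p ∈ S, P {ω | Q p.1 (p.1 + p.2) ω} :=
        (measure_mono hsub).trans (measure_biUnion_finset_le _ _)
    _ ≤ ∑ _p ∈ S, C := Finset.sum_le_sum fun p hp => by
        simp only [S, Finset.mem_product, Finset.mem_range, Finset.mem_Icc] at hp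
        exact hQ _ (by omega) _ hp.2.1 hp.2.2
    _ = (N + 1) * M * C := by simp [S, Nat.card_Icc]

lemma ceil_exp_add_one_mul_ceil_exp_mul_le {n : ℕ} (hn : 1 ≤ n) {θ c : ℝ} (hθ : 0 ≤ θ) (hc : 1 ≤ c) :
    ((⌈exp n⌉₊ + 1) * ⌈exp (n * θ)⌉₊ : ℝ) * (2 ^ (c ^ 2 + 1) * exp (-(c ^ 2 * (n * (1 - θ)))))
      ≤ 8 ^ (1 + c ^ 2) / (√π * c * (1 + c ^ 2)) * exp (-((1 - θ) * c ^ 2 - (1 + θ)) * n) := by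
  have hN : (⌈exp n⌉₊ : ℝ) + 1 ≤ 2 * exp n := by
    have := exp_one_gt_d9
    linarith [Nat.ceil_lt_add_one (exp_pos n).le,
      exp_le_exp.2 (show (1 : ℝ) ≤ n by exact_mod_cast hn)]
  have hM := natCeil_exp_le_two_mul_exp (by positivity : 0 ≤ (n : ℝ) * θ)
  calc _ ≤ (2 * exp n) * (2 * exp (n * θ)) *
          (2 ^ (c ^ 2 + 1) * exp (-(c ^ 2 * (n * (1 - θ))))) := by gcongr
    _ = 2 ^ (c ^ 2 + 1) * 2 ^ (2 : ℝ) * exp (n + n * θ + -(c ^ 2 * (n * (1 - θ)))) := by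
        rw [exp_add, exp_add]
        norm_num
        ring
    _ = 2 ^ (c ^ 2 + 3) * exp (-((1 - θ) * c ^ 2 - (1 + θ)) * n) := by
        rw [← rpow_add two_pos]
        ring_nf
    _ ≤ _ := by gcongr; exact two_rpow_add_three_le hc

theorem stmt17_general {Ω : Type*} [MeasurableSpace Ω] (P : Measure Ω)
    (W : ℝ → Ω → ℝ) (hW : IsBrownianMotion P W)
    (θ ε : ℝ) (hθ : θ ∈ Set.Ioo (0 : ℝ) 1) (hε : (1 + θ) / (1 - θ) - 1 < ε)
    (ρ : ℝ) (hρ : ρ = (1 - θ) * (1 + ε) ^ 2 - (1 + θ))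
    (n : ℕ) (hn : 1 / (1 - θ) ≤ (n : ℝ)) :
    P {ω | ∃ i j : ℕ, i < j ∧ j ≤ Nat.ceil (Real.exp n) ∧
        j - i ≤ Nat.ceil (Real.exp ((n : ℝ) * θ)) ∧
        1 + ε ≤ |W ((j : ℝ) / Real.exp n) ω - W ((i : ℝ) / Real.exp n) ω| /
          Real.sqrt (2 * (((j : ℝ) - (i : ℝ)) * Real.exp (-(n : ℝ))) *
            Real.log (1 / (((j : ℝ) - (i : ℝ)) * Real.exp (-(n : ℝ)))))}
      ≤ ENNReal.ofReal
          ((8 : ℝ) ^ ((1 : ℝ) + (1 + ε) ^ 2) /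
              (Real.sqrt π * (1 + ε) * (1 + (1 + ε) ^ 2)) *
            Real.exp (-ρ * (n : ℝ))) := by
  obtain ⟨hθ0, hθ1⟩ := hθ
  have hθ1' : 0 < 1 - θ := by linarith
  have hc : 1 ≤ 1 + ε := by
    have : 1 < (1 + θ) / (1 - θ) := by rw [lt_div_iff₀ hθ1']; linarith
    linarith
  have hm : 1 ≤ n * (1 - θ) := by rwa [div_le_iff₀ hθ1'] at hn
  have hn1 : 1 ≤ n := by exact_mod_cast (show (1 : ℝ) ≤ n by nlinarith)
  have hM := natCeil_exp_le_two_mul_exp (by positivity : 0 ≤ (n : ℝ) * θ)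
  refine (measure_exists_close_pair_le P _ _ _ fun i _ k hk hkM =>
    hW.measure_grid_increment_le hm (by linarith) i hk
      ((Nat.cast_le.2 hkM).trans hM)).trans ?_
  rw [hρ, ← ENNReal.ofReal_natCast, ← ENNReal.ofReal_natCast, ← ENNReal.ofReal_one,
    ← ENNReal.ofReal_add (by positivity) zero_le_one, ← ENNReal.ofReal_mul (by positivity),
    ← ENNReal.ofReal_mul (by positivity)]
  exact ENNReal.ofReal_le_ofReal (ceil_exp_add_one_mul_ceil_exp_mul_le hn1 hθ0.le hc)

/-- Lévy's modulus of continuity, upward infringement estimate: with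
`μ(δ) = √(2δ ln(1/δ))`, for `θ ∈ (0,1)`, `ε > (1+θ)/(1-θ) - 1`,
`ρ = (1-θ)(1+ε)² - (1+θ)` and `K_ε = 8^{1+(1+ε)²}/(√π·(1+ε)·(1+(1+ε)²))`,
for every `n ≥ 1/(1-θ)`:
`P(max over 0 ≤ i < j ≤ ⌈eⁿ⌉, 1 ≤ j-i ≤ ⌈e^{nθ}⌉ of
  |W_{j/eⁿ} - W_{i/eⁿ}|/μ((j-i)e^{-n}) ≥ 1+ε) ≤ K_ε·e^{-ρn}`. -/
theorem stmt17 {Ω : Type*} [MeasurableSpace Ω] (P : Measure Ω) [IsProbabilityMeasure P]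
    (W : ℝ → Ω → ℝ) (hW : IsBrownianMotion P W)
    (θ ε : ℝ) (hθ : θ ∈ Set.Ioo (0 : ℝ) 1) (hε : (1 + θ) / (1 - θ) - 1 < ε)
    (ρ : ℝ) (hρ : ρ = (1 - θ) * (1 + ε) ^ 2 - (1 + θ))
    (n : ℕ) (hn : 1 / (1 - θ) ≤ (n : ℝ)) :
    P {ω | ∃ i j : ℕ, i < j ∧ j ≤ Nat.ceil (Real.exp n) ∧
        j - i ≤ Nat.ceil (Real.exp ((n : ℝ) * θ)) ∧
        1 + ε ≤ |W ((j : ℝ) / Real.exp n) ω - W ((i : ℝ) / Real.exp n) ω| /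
          Real.sqrt (2 * (((j : ℝ) - (i : ℝ)) * Real.exp (-(n : ℝ))) *
            Real.log (1 / (((j : ℝ) - (i : ℝ)) * Real.exp (-(n : ℝ)))))}
      ≤ ENNReal.ofReal
          ((8 : ℝ) ^ ((1 : ℝ) + (1 + ε) ^ 2) /
              (Real.sqrt π * (1 + ε) * (1 + (1 + ε) ^ 2)) *
            Real.exp (-ρ * (n : ℝ))) :=
  stmt17_general P W hW θ ε hθ hε ρ hρ n hn
end

section
/- Let W be a standard Brownian motion on [0,1] and c_π := 2^{10}/π². For λ > 0 and n ∈ ℕ₀ let E^n_λ := {∃ s ∈ [0,1] : sup_{t ∈ [s-2^{-n}, s+2^{-n}] ∩ [0,1]} |W(s) - W(t)|/2^{-n} ≤ λ}. Then P(E^n_λ) ≤ c_π·λ⁴·2^{-n}. -/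
open MeasureTheory ProbabilityTheory Set Real
open scoped ENNReal NNReal

lemma ENNReal.ofReal_pow_le (b : ℝ) (k : ℕ) : ENNReal.ofReal b ^ k ≤ ENNReal.ofReal (b ^ k) := by
  rcases le_total 0 b with hb | hb
  · rw [ENNReal.ofReal_pow hb]
  · cases k <;> simp [ENNReal.ofReal_of_nonpos hb]

lemma gaussianPDFReal_le (μ : ℝ) (v : ℝ≥0) (x : ℝ) :
    gaussianPDFReal μ v x ≤ (√(2 * π * v))⁻¹ := by
  rw [gaussianPDFReal_def]
  refine mul_le_of_le_one_right (by positivity) (Real.exp_le_one_iff.mpr ?_)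
  exact div_nonpos_of_nonpos_of_nonneg (neg_nonpos.mpr (sq_nonneg _)) (by positivity)

lemma gaussianReal_le_mul_volume (μ : ℝ) {v : ℝ≥0} (hv : v ≠ 0) (s : Set ℝ) :
    gaussianReal μ v s ≤ ENNReal.ofReal (√(2 * π * v))⁻¹ * volume s := by
  rw [gaussianReal_apply μ hv, ← setLIntegral_const]
  exact lintegral_mono fun x => ENNReal.ofReal_le_ofReal (gaussianPDFReal_le μ v x)

lemma gaussianReal_Icc_neg_le (μ : ℝ) {v : ℝ≥0} (hv : v ≠ 0) (a : ℝ) :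
    gaussianReal μ v (Icc (-a) a) ≤ ENNReal.ofReal (2 * a / √(2 * π * v)) := by
  refine (gaussianReal_le_mul_volume μ hv _).trans_eq ?_
  rw [Real.volume_Icc, ← ENNReal.ofReal_mul (by positivity)]
  ring_nf

lemma exists_lt_mem_Icc_div {N : ℕ} (hN : 0 < N) {s : ℝ} (hs : s ∈ Icc (0 : ℝ) 1) :
    ∃ j < N, s ∈ Icc ((j : ℝ) / N) ((j + 1) / N) := by
  have hN' : (0 : ℝ) < N := by exact_mod_cast hN
  rcases hs.2.lt_or_eq with hs1 | rfl
  · refine ⟨⌊s * N⌋₊, (Nat.floor_lt (mul_nonneg hs.1 hN'.le)).mpr (by nlinarith), ?_, ?_⟩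
    · rw [div_le_iff₀ hN']
      exact Nat.floor_le (mul_nonneg hs.1 hN'.le)
    · rw [le_div_iff₀ hN']
      exact (Nat.lt_floor_add_one _).le
  · refine ⟨N - 1, Nat.sub_lt hN one_pos, ?_, ?_⟩ <;>
      simp [Nat.cast_sub (Nat.one_le_iff_ne_zero.mpr hN.ne'), div_le_one hN', hN'.ne']

noncomputable def gridPoint (N k j i : ℕ) : ℝ := (j + i / k) / N

lemma gridPoint_succ {N k : ℕ} (hk : k ≠ 0) (j i : ℕ) :
    gridPoint N k j (i + 1) = gridPoint N k j i + ((k : ℝ) * N)⁻¹ := by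
  have : (k : ℝ) ≠ 0 := by exact_mod_cast hk
  simp only [gridPoint]
  push_cast
  field_simp
  ring

lemma gridPoint_mem_Icc (N : ℕ) {k i : ℕ} (hi : i ≤ k) (j : ℕ) :
    gridPoint N k j i ∈ Icc ((j : ℝ) / N) ((j + 1) / N) := by
  have hik : (i : ℝ) / k ≤ 1 := div_le_one_of_le₀ (by exact_mod_cast hi) (Nat.cast_nonneg k)
  constructor <;> unfold gridPoint <;> gcongr
  · exact le_add_of_nonneg_right (by positivity)

lemma exists_gridPoint_abs_sub_le (f : ℝ → ℝ) {N : ℕ} (hN : 0 < N) (k : ℕ) {s c : ℝ}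
    (hs : s ∈ Icc (0 : ℝ) 1)
    (hf : ∀ u ∈ Icc (s - (N : ℝ)⁻¹) (s + (N : ℝ)⁻¹) ∩ Icc (0 : ℝ) 1, |f s - f u| ≤ c) :
    ∃ j < N, ∀ i : Fin k, |f (gridPoint N k j (i + 1)) - f (gridPoint N k j i)| ≤ 2 * c := by
  obtain ⟨j, hjN, hsj⟩ := exists_lt_mem_Icc_div hN hs
  have hN' : (0 : ℝ) < N := by exact_mod_cast hN
  have hblock :
      Icc ((j : ℝ) / N) ((j + 1) / N) ⊆ Icc (s - (N : ℝ)⁻¹) (s + (N : ℝ)⁻¹) ∩ Icc 0 1 := by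
    have hj1 : ((j : ℝ) + 1) / N ≤ 1 := by
      rw [div_le_one hN']
      exact_mod_cast hjN
    intro u hu
    have hwidth : ((j : ℝ) + 1) / N = j / N + (N : ℝ)⁻¹ := by ring
    have hj0 : (0 : ℝ) ≤ j / N := by positivity
    refine ⟨⟨?_, ?_⟩, ?_, ?_⟩ <;> linarith [hu.1, hu.2, hsj.1, hsj.2]
  have hmem : ∀ i ≤ k, |f s - f (gridPoint N k j i)| ≤ c :=
    fun i hi => hf _ (hblock (gridPoint_mem_Icc N hi j))
  refine ⟨j, hjN, fun i => ?_⟩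
  have h0 := abs_le.mp (hmem i i.2.le)
  have h1 := abs_le.mp (hmem (i + 1) i.2)
  rw [abs_le]
  constructor <;> linarith

namespace IsBrownianMotion

variable {Ω : Type*} [MeasurableSpace Ω] {P : Measure Ω} {W : ℝ → Ω → ℝ}

lemma measure_abs_sub_le_le (hW : IsBrownianMotion P W) {s t : ℝ} (hst : s < t) (a : ℝ) :
    P {ω | |W t ω - W s ω| ≤ a} ≤ ENNReal.ofReal (2 * a / √(2 * π * (t - s))) := by
  have hv : (t - s).toNNReal ≠ 0 := by simpa using hst
  have h := gaussianReal_Icc_neg_le 0 hv a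
  have hmeas : Measurable fun ω => W t ω - W s ω := (hW.meas t).sub (hW.meas s)
  rw [← hW.incr_law s t hst.le, Measure.map_apply hmeas measurableSet_Icc,
    Real.coe_toNNReal _ (sub_nonneg.mpr hst.le)] at h
  convert h using 2
  ext ω
  simp [abs_le]

lemma measure_forall_abs_incr_le (hW : IsBrownianMotion P W) {k : ℕ} {t : ℕ → ℝ} {q : ℝ}
    (hq : 0 < q) (ht : ∀ i, t (i + 1) = t i + q) (a : ℝ) :
    P {ω | ∀ i : Fin k, |W (t (i + 1)) ω - W (t i) ω| ≤ a}
      ≤ ENNReal.ofReal (2 * a / √(2 * π * q)) ^ k := by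
  have hmono : Monotone t := monotone_nat_of_le_succ fun i => by linarith [ht i]
  have hprod := (hW.indep_incr k t hmono).meas_iInter
    (s := fun i : Fin k => {ω | |W (t (i + 1)) ω - W (t i) ω| ≤ a})
    fun i => ⟨{x | |x| ≤ a}, ?_, rfl⟩
  · rw [ofPred_forall, hprod]
    refine (Finset.prod_le_pow_card Finset.univ _ _ fun i _ => ?_).trans_eq
      (by rw [Finset.card_univ, Fintype.card_fin])
    have h := hW.measure_abs_sub_le_le (by linarith [ht i] : t i < t (i + 1)) a
    simpa only [ht, add_sub_cancel_left] using h
  · exact measurableSet_le (by fun_prop) measurable_const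

lemma measure_exists_abs_sub_le_le (hW : IsBrownianMotion P W) {N k : ℕ} (hN : 0 < N)
    (hk : 0 < k) (c : ℝ) :
    P {ω | ∃ s ∈ Icc (0 : ℝ) 1,
        ∀ u ∈ Icc (s - (N : ℝ)⁻¹) (s + (N : ℝ)⁻¹) ∩ Icc (0 : ℝ) 1, |W s ω - W u ω| ≤ c}
      ≤ N * ENNReal.ofReal (2 * (2 * c) / √(2 * π * ((k : ℝ) * N)⁻¹)) ^ k := by
  have hq : 0 < ((k : ℝ) * N)⁻¹ := by positivity
  calc P _ ≤ P (⋃ j ∈ Finset.range N,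
        {ω | ∀ i : Fin k, |W (gridPoint N k j (i + 1)) ω - W (gridPoint N k j i) ω| ≤ 2 * c}) := by
        refine measure_mono fun ω ⟨s, hs, hω⟩ => ?_
        obtain ⟨j, hjN, hj⟩ := exists_gridPoint_abs_sub_le (W · ω) hN k hs hω
        exact mem_biUnion (Finset.mem_range.mpr hjN) hj
    _ ≤ ∑ j ∈ Finset.range N,
        P {ω | ∀ i : Fin k, |W (gridPoint N k j (i + 1)) ω - W (gridPoint N k j i) ω| ≤ 2 * c} :=
        measure_biUnion_finset_le _ _
    _ ≤ _ := by
        refine (Finset.sum_le_card_nsmul _ _ _ fun j _ => ?_).trans_eq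
          (by rw [Finset.card_range, nsmul_eq_mul])
        exact hW.measure_forall_abs_incr_le hq (gridPoint_succ hk.ne' j) _

end IsBrownianMotion

theorem stmt18_general {Ω : Type*} [MeasurableSpace Ω] (P : Measure Ω)
    (W : ℝ → Ω → ℝ) (hW : IsBrownianMotion P W)
    (lam : ℝ) (n : ℕ) :
    P {ω | ∃ s ∈ Set.Icc (0 : ℝ) 1,
        ∀ u ∈ Set.Icc (s - (2 : ℝ) ^ (-(n : ℤ))) (s + (2 : ℝ) ^ (-(n : ℤ))) ∩
            Set.Icc (0 : ℝ) 1,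
          |W s ω - W u ω| / (2 : ℝ) ^ (-(n : ℤ)) ≤ lam}
      ≤ ENNReal.ofReal ((2 ^ 10 / π ^ 2) * lam ^ 4 * (2 : ℝ) ^ (-(n : ℤ))) := by
  have hh : (2 : ℝ) ^ (-(n : ℤ)) = ((2 ^ n : ℕ) : ℝ)⁻¹ := by simp
  have hpos : (0 : ℝ) < 2 ^ (-(n : ℤ)) := by positivity
  rw [hh] at hpos ⊢
  calc P _ ≤ P {ω | ∃ s ∈ Icc (0 : ℝ) 1,
        ∀ u ∈ Icc (s - ((2 ^ n : ℕ) : ℝ)⁻¹) (s + ((2 ^ n : ℕ) : ℝ)⁻¹) ∩ Icc (0 : ℝ) 1,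
          |W s ω - W u ω| ≤ lam * ((2 ^ n : ℕ) : ℝ)⁻¹} := by
        refine measure_mono fun ω ⟨s, hs, hω⟩ => ⟨s, hs, fun u hu => ?_⟩
        exact (div_le_iff₀ hpos).mp (hω u hu)
    _ ≤ _ := hW.measure_exists_abs_sub_le_le (Nat.two_pow_pos n) four_pos _
    _ ≤ _ := by
        set M : ℝ := ((2 ^ n : ℕ) : ℝ)
        grw [ENNReal.ofReal_pow_le, ← ENNReal.ofReal_natCast,
          ← ENNReal.ofReal_mul (Nat.cast_nonneg _)]
        refine ENNReal.ofReal_le_ofReal (le_of_eq ?_)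
        have hM : 0 < M := by positivity
        have hsqrt : √(2 * π * (4 * M)⁻¹) ^ 4 = (2 * π * (4 * M)⁻¹) ^ 2 := by
          rw [show 4 = 2 * 2 from rfl, pow_mul, sq_sqrt (by positivity)]
        rw [Nat.cast_ofNat, div_pow, hsqrt]
        field_simp
        ring

/-- Paley–Wiener–Zygmund key estimate: with `c_π = 2¹⁰/π²`, for `λ > 0`, `n ∈ ℕ`,
`P(∃ s ∈ [0,1] : sup_{t ∈ [s-2^{-n}, s+2^{-n}] ∩ [0,1]} |W(s)-W(t)|/2^{-n} ≤ λ)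
  ≤ c_π·λ⁴·2^{-n}`. -/
theorem stmt18 {Ω : Type*} [MeasurableSpace Ω] (P : Measure Ω) [IsProbabilityMeasure P]
    (W : ℝ → Ω → ℝ) (hW : IsBrownianMotion P W)
    (lam : ℝ) (hlam : 0 < lam) (n : ℕ) :
    P {ω | ∃ s ∈ Set.Icc (0 : ℝ) 1,
        ∀ u ∈ Set.Icc (s - (2 : ℝ) ^ (-(n : ℤ))) (s + (2 : ℝ) ^ (-(n : ℤ))) ∩
            Set.Icc (0 : ℝ) 1,
          |W s ω - W u ω| / (2 : ℝ) ^ (-(n : ℤ)) ≤ lam}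
      ≤ ENNReal.ofReal ((2 ^ 10 / π ^ 2) * lam ^ 4 * (2 : ℝ) ^ (-(n : ℤ))) :=
  stmt18_general P W hW lam n
end
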